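/- arXiv:2306.15328 — 7 statements merged into one kernel-verified Lean document; each statement's English description precedes it below -/
import Mathlib

section
/- Let (Ω, ℙ) be a probability space, S a standard Borel space, X : Ω → S a random element with distribution μ, and E : Ω → ℝ a random variable independent of X whose distribution has density p with respect to Lebesgue measure. Let g : ℝ × S → ℝ be measurable such that for each x ∈ S the map u ↦ g(u, x) is a strictly increasing differentiable bijection of ℝ with everywhere positive derivative ∂ᵤg(u, x); write g⁻¹(·, x) for its inverse. Define C = g(E, X) and the weight function ω(x, c) = p(g⁻¹(c, x)) / ∂ᵤg(g⁻¹(c, x), x). Then the joint distribution of the pair (X, C) equals the product measure μ ⊗ Lebesgue with density (x, c) ↦ ω(x, c), i.e. the law of ω ↦ (X(ω), C(ω)) is (μ.prod volume).withDensity ((x,c) ↦ ω(x,c)). -/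
open MeasureTheory ProbabilityTheory

/-- 1D change of variables for lintegrals, over all of `ℝ`. -/
lemma lintegral_change_of_var (f f' : ℝ → ℝ)
    (hderiv : ∀ u, HasDerivAt f (f' u) u)
    (hbij : Function.Bijective f) (h : ℝ → ENNReal) :
    ∫⁻ c, h c = ∫⁻ u, ENNReal.ofReal |f' u| * h (f u) := by
  have key := MeasureTheory.lintegral_image_eq_lintegral_abs_det_fderiv_mul volume
    MeasurableSet.univ
    (fun u _ => ((hderiv u).hasDerivWithinAt.hasFDerivWithinAt))
    hbij.injective.injOn h
  simpa [Set.image_univ, hbij.surjective.range_eq, ContinuousLinearMap.det_toSpanSingleton] using key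

/-- **Joint density factorization (key identity in the paper's Lemma 2).**
Let `X : Ω → S` have law `μ`, and let `E : Ω → ℝ` be independent of `X` with Lebesgue
density `p`. Suppose `g (·, x)` is, for each `x`, a strictly increasing differentiable
bijection of `ℝ` with everywhere positive derivative `g'(·, x)`, with inverse `gInv (·, x)`.
Then the law of `ω ↦ (X ω, g (E ω, X ω))` is `(μ.prod volume).withDensity ω̃` where
`ω̃ (x, c) = p (gInv (c, x)) / g' (gInv (c, x), x)`. -/
theorem joint_law_eq_prod_withDensity_weight
    {Ω S : Type*} [MeasurableSpace Ω] [MeasurableSpace S] [StandardBorelSpace S]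
    (P : Measure Ω) [IsProbabilityMeasure P]
    (X : Ω → S) (hX : Measurable X)
    (μ : Measure S) (hμ : μ = P.map X)
    (E : Ω → ℝ) (hE : Measurable E)
    (hindep : IndepFun E X P)
    (p : ℝ → ℝ) (hp_meas : Measurable p) (hp_nonneg : ∀ x, 0 ≤ p x)
    (hE_law : P.map E = volume.withDensity (fun u => ENNReal.ofReal (p u)))
    (g : ℝ × S → ℝ) (g' : ℝ × S → ℝ) (gInv : ℝ × S → ℝ)
    (hg_meas : Measurable g) (hg'_meas : Measurable g') (hgInv_meas : Measurable gInv)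
    (hg_deriv : ∀ x u, HasDerivAt (fun u => g (u, x)) (g' (u, x)) u)
    (hg'_pos : ∀ x u, 0 < g' (u, x))
    (hg_mono : ∀ x, StrictMono (fun u => g (u, x)))
    (hg_bij : ∀ x, Function.Bijective (fun u => g (u, x)))
    (hgInv_left : ∀ x u, gInv (g (u, x), x) = u)
    (hgInv_right : ∀ x c, g (gInv (c, x), x) = c) :
    P.map (fun ω => (X ω, g (E ω, X ω))) =
      (μ.prod volume).withDensity
        (fun q => ENNReal.ofReal (p (gInv (q.2, q.1)) / g' (gInv (q.2, q.1), q.1))) := by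
  -- notation
  set ν : Measure ℝ := volume.withDensity (fun u => ENNReal.ofReal (p u)) with hν
  have hpol : IsProbabilityMeasure (P.map X) := Measure.isProbabilityMeasure_map hX.aemeasurable
  have hμprob : IsProbabilityMeasure μ := by rw [hμ]; exact hpol
  -- law of (E, X)
  have hEX : P.map (fun ω => (E ω, X ω)) = ν.prod μ := by
    rw [← hE_law, hμ]
    exact (indepFun_iff_map_prod_eq_prod_map_map hE.aemeasurable hX.aemeasurable).mp hindep
  have hT : Measurable (fun q : ℝ × S => (q.2, g q)) :=
    measurable_snd.prodMk hg_meas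
  have hmap : P.map (fun ω => (X ω, g (E ω, X ω))) =
      (ν.prod μ).map (fun q : ℝ × S => (q.2, g q)) := by
    rw [← hEX, Measure.map_map hT (hE.prodMk hX)]
    rfl
  rw [hmap]
  -- density function
  set w : S × ℝ → ENNReal :=
    fun q => ENNReal.ofReal (p (gInv (q.2, q.1)) / g' (gInv (q.2, q.1), q.1)) with hw
  have hw_meas : Measurable w := by
    apply Measurable.ennreal_ofReal
    exact (hp_meas.comp (hgInv_meas.comp (measurable_snd.prodMk measurable_fst))).div
      (hg'_meas.comp ((hgInv_meas.comp (measurable_snd.prodMk measurable_fst)).prodMk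
        measurable_fst))
  have : SFinite ν := by
    rw [hν]; infer_instance
  ext s hs
  rw [Measure.map_apply hT hs, withDensity_apply _ hs]
  -- LHS as iterated integral in x then u
  have hind_meas : Measurable (fun q : ℝ × S => s.indicator (fun _ => (1 : ENNReal)) (q.2, g q)) := by
    exact (measurable_const.indicator hs).comp hT
  have hLHS : (ν.prod μ) ((fun q : ℝ × S => (q.2, g q)) ⁻¹' s)
      = ∫⁻ x, (∫⁻ u, s.indicator (fun _ => (1 : ENNReal)) (x, g (u, x)) ∂ν) ∂μ := by
    rw [← lintegral_indicator_one (hT hs)]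
    exact (lintegral_prod _ hind_meas.aemeasurable).trans
      (lintegral_lintegral_swap hind_meas.aemeasurable)
  rw [hLHS]
  -- RHS as iterated integral
  have hw_ind_meas : Measurable (fun q : S × ℝ => s.indicator w q) := hw_meas.indicator hs
  have hRHS : ∫⁻ q in s, w q ∂(μ.prod volume)
      = ∫⁻ x, (∫⁻ c, s.indicator w (x, c)) ∂μ := by
    rw [← lintegral_indicator hs, lintegral_prod _ hw_ind_meas.aemeasurable]
  rw [hRHS]
  -- pointwise in x
  refine lintegral_congr fun x => ?_
  have hFmeas : Measurable (fun u : ℝ => s.indicator (fun _ => (1 : ENNReal)) (x, g (u, x))) :=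
    (measurable_const.indicator hs).comp ((measurable_const.prodMk
      (hg_meas.comp (measurable_id.prodMk measurable_const))) : Measurable
        fun u : ℝ => ((x, g (u, x)) : S × ℝ))
  rw [hν, lintegral_withDensity_eq_lintegral_mul _ (by fun_prop) hFmeas]
  rw [lintegral_change_of_var (fun u => g (u, x)) (fun u => g' (u, x)) (hg_deriv x)
    (hg_bij x) (fun c => s.indicator w (x, c))]
  refine lintegral_congr fun u => ?_
  have hginv : gInv (g (u, x), x) = u := hgInv_left x u
  have hgp := hg'_pos x u
  by_cases hmem : (x, g (u, x)) ∈ s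
  · simp only [Pi.mul_apply, Set.indicator_of_mem hmem, hw, hginv, abs_of_pos hgp, mul_one]
    rw [← ENNReal.ofReal_mul hgp.le, mul_div_cancel₀ _ hgp.ne']
  · simp [Set.indicator_of_notMem hmem]
end

section
/- Let (Ω, ℙ) be a probability space, S a standard Borel space, X : Ω → S a random element with distribution μ, and E : Ω → ℝ a random variable independent of X whose distribution has density p with respect to Lebesgue measure. Let g : ℝ × S → ℝ be measurable such that for each x ∈ S the map u ↦ g(u, x) is a strictly increasing differentiable bijection of ℝ with everywhere positive derivative ∂ᵤg(u, x); write g⁻¹(·, x) for its inverse. Define C = g(E, X) and the weight function ω(x, c) = p(g⁻¹(c, x)) / ∂ᵤg(g⁻¹(c, x), x). Then for (law of C)-almost every c ∈ ℝ, the regular conditional distribution of X given C = c is the normalized reweighted measure: condDistrib X C ℙ (c) = (μ.withDensity (x ↦ ω(x, c)) univ)⁻¹ • μ.withDensity (x ↦ ω(x, c)). In particular the conditional distribution of X given C = c has density proportional to x ↦ ω(x, c) with respect to μ. -/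
/-!
Since `E` and `X` are independent, `(E, X)` has law `law E ⊗ μ`. For fixed `x`, the change
of variables `c = g (u, x)` turns the density `p` of `E` into `c ↦ ω (x, c)`, so `(C, X)` has
density `ω` with respect to `volume ⊗ μ`. Bayes' rule for a joint density then identifies the
conditional law of `X` given `C = c` with `μ` reweighted by `ω (·, c)` and normalized; the
normalizing constant is the density of the law of `C`, hence finite for almost every `c`.
-/

open MeasureTheory ProbabilityTheory
open scoped ENNReal

theorem map_withDensity_ofReal_eq_of_hasDerivAt {p f f' finv : ℝ → ℝ}
    (hderiv : ∀ u, HasDerivAt f (f' u) u) (hpos : ∀ u, 0 < f' u)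
    (hleft : Function.LeftInverse finv f) (hright : Function.RightInverse finv f) :
    (volume.withDensity fun u => ENNReal.ofReal (p u)).map f
      = volume.withDensity fun c => ENNReal.ofReal (p (finv c) / f' (finv c)) := by
  have hf : Measurable f :=
    (continuous_iff_continuousAt.2 fun u => (hderiv u).continuousAt).measurable
  ext A hA
  have hpre : MeasurableSet (f ⁻¹' A) := hf hA
  have hcov := lintegral_image_eq_lintegral_abs_deriv_mul hpre
    (fun u _ => (hderiv u).hasDerivWithinAt) hleft.injective.injOn
    fun c => ENNReal.ofReal (p (finv c) / f' (finv c))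
  rw [hright.surjective.image_preimage] at hcov
  rw [Measure.map_apply hf hA, withDensity_apply _ hpre, withDensity_apply _ hA, hcov]
  refine setLIntegral_congr_fun hpre fun u _ => ?_
  rw [hleft u, abs_of_pos (hpos u), ← ENNReal.ofReal_mul (hpos u).le,
    mul_div_cancel₀ _ (hpos u).ne']

section JointDensity

variable {Ω α β S : Type*} [MeasurableSpace Ω] [MeasurableSpace α] [MeasurableSpace β]
  [MeasurableSpace S] {ν : Measure α} {ρ : Measure β} {μ : Measure S}
  [SFinite ν] [SFinite ρ] [SFinite μ] {w : β → S → ℝ≥0∞}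

theorem map_prod_eq_withDensity_prod_of_map_eq {g : α × S → β} (hg : Measurable g)
    (hw : Measurable (Function.uncurry w))
    (hfiber : ∀ x, ν.map (fun u => g (u, x)) = ρ.withDensity fun c => w c x) :
    (ν.prod μ).map (fun q => (g q, q.2)) = (ρ.prod μ).withDensity (Function.uncurry w) := by
  have hT : Measurable fun q : α × S => (g q, q.2) := hg.prodMk measurable_snd
  ext s hs
  rw [Measure.map_apply hT hs, Measure.prod_apply_symm (hT hs), withDensity_apply _ hs,
    ← lintegral_indicator hs, lintegral_prod_symm _ (hw.indicator hs).aemeasurable]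
  refine lintegral_congr fun x => ?_
  have hsx : MeasurableSet {c | (c, x) ∈ s} := measurable_prodMk_right hs
  have hgx : Measurable fun u => g (u, x) := hg.comp measurable_prodMk_right
  calc ν ((fun u => g (u, x)) ⁻¹' {c | (c, x) ∈ s})
      = ∫⁻ c in {c | (c, x) ∈ s}, w c x ∂ρ := by
        rw [← Measure.map_apply hgx hsx, hfiber, withDensity_apply _ hsx]
    _ = ∫⁻ c, s.indicator (Function.uncurry w) (c, x) ∂ρ :=
        (lintegral_indicator hsx _).symm

noncomputable def normalizedWithDensityKernel (μ : Measure S) [SFinite μ]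
    (w : β → S → ℝ≥0∞) : Kernel β S :=
  (Kernel.const β μ).withDensity fun c x => (∫⁻ y, w c y ∂μ)⁻¹ * w c x

theorem measurable_normalizedWithDensityKernel_density
    (hw : Measurable (Function.uncurry w)) :
    Measurable (Function.uncurry fun c x => (∫⁻ y, w c y ∂μ)⁻¹ * w c x) :=
  (hw.lintegral_prod_right'.comp measurable_fst).inv.mul hw

theorem normalizedWithDensityKernel_apply (hw : Measurable (Function.uncurry w)) (c : β) :
    normalizedWithDensityKernel μ w c
      = (μ.withDensity (w c) Set.univ)⁻¹ • μ.withDensity (w c) := by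
  rw [normalizedWithDensityKernel,
    Kernel.withDensity_apply _ (measurable_normalizedWithDensityKernel_density hw),
    Kernel.const_apply, withDensity_apply _ MeasurableSet.univ, setLIntegral_univ,
    ← withDensity_smul _ hw.of_uncurry_left]
  rfl

theorem isFiniteKernel_normalizedWithDensityKernel (hw : Measurable (Function.uncurry w)) :
    IsFiniteKernel (normalizedWithDensityKernel μ w) := by
  refine ⟨1, ENNReal.one_lt_top, fun c => ?_⟩
  rw [normalizedWithDensityKernel_apply hw, Measure.smul_apply, smul_eq_mul]
  exact ENNReal.inv_mul_le_one _

theorem map_fst_withDensity_prod (hw : Measurable (Function.uncurry w)) :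
    ((ρ.prod μ).withDensity (Function.uncurry w)).map Prod.fst
      = ρ.withDensity fun c => ∫⁻ x, w c x ∂μ := by
  ext A hA
  rw [Measure.map_apply measurable_fst hA, withDensity_apply _ (measurable_fst hA),
    withDensity_apply _ hA, ← Set.prod_univ, setLIntegral_prod _ hw.aemeasurable]
  simp only [Measure.restrict_univ, Function.uncurry_apply_pair]

theorem withDensity_prod_eq_withDensity_compProd (hw : Measurable (Function.uncurry w))
    (hfin : ∀ᵐ c ∂ρ, ∫⁻ x, w c x ∂μ ≠ ∞) :
    (ρ.prod μ).withDensity (Function.uncurry w)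
      = ρ.withDensity (fun c => ∫⁻ x, w c x ∂μ) ⊗ₘ
          normalizedWithDensityKernel μ w := by
  set Z := fun c => ∫⁻ x, w c x ∂μ
  have hZ : Measurable Z := hw.lintegral_prod_right'
  have := isFiniteKernel_normalizedWithDensityKernel (μ := μ) hw
  unfold normalizedWithDensityKernel at this ⊢
  have hv := measurable_normalizedWithDensityKernel_density (μ := μ) hw
  rw [Measure.compProd_withDensity hv, Measure.compProd_const, prod_withDensity_left hZ]
  refine (withDensity_congr_ae ?_).trans (withDensity_mul _ (hZ.comp measurable_fst) hv)
  have hcancel : ∀ᵐ c ∂ρ, ∀ᵐ x ∂μ, w c x = Z c * ((Z c)⁻¹ * w c x) := by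
    filter_upwards [hfin] with c hc
    rcases eq_or_ne (Z c) 0 with h0 | h0
    -- the junk value `0⁻¹ = ∞` is harmless: `w c` vanishes `μ`-a.e. there
    · filter_upwards [(lintegral_eq_zero_iff hw.of_uncurry_left).1 h0] with x hx
      simp [show w c x = 0 from hx]
    · exact ae_of_all _ fun x => by rw [← mul_assoc, ENNReal.mul_inv_cancel h0 hc, one_mul]
  exact (Measure.ae_prod_iff_ae_ae
    (measurableSet_eq_fun hw ((hZ.comp measurable_fst).mul hv))).2 hcancel

theorem condDistrib_ae_eq_of_map_eq_withDensity_prod [StandardBorelSpace S] [Nonempty S]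
    {P : Measure Ω} [IsProbabilityMeasure P] {X : Ω → S} {Y : Ω → β}
    (hX : Measurable X) (hY : Measurable Y) (hw : Measurable (Function.uncurry w))
    (hjoint : P.map (fun ω => (Y ω, X ω)) = (ρ.prod μ).withDensity (Function.uncurry w)) :
    ∀ᵐ c ∂(P.map Y),
      condDistrib X Y P c = (μ.withDensity (w c) Set.univ)⁻¹ • μ.withDensity (w c) := by
  have hmarg : P.map Y = ρ.withDensity fun c => ∫⁻ x, w c x ∂μ := by
    rw [← map_fst_withDensity_prod hw, ← hjoint, Measure.map_map measurable_fst (hY.prodMk hX)]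
    rfl
  have hfin : ∀ᵐ c ∂ρ, ∫⁻ x, w c x ∂μ ≠ ∞ := by
    have hZ : Measurable fun c => ∫⁻ x, w c x ∂μ := hw.lintegral_prod_right'
    refine ae_lt_top hZ ?_ |>.mono fun _ h => h.ne
    rw [← setLIntegral_univ, ← withDensity_apply _ MeasurableSet.univ, ← hmarg]
    simp [Measure.map_apply hY MeasurableSet.univ]
  have := isFiniteKernel_normalizedWithDensityKernel (μ := μ) hw
  have hcomp :
      P.map (fun ω => (Y ω, X ω)) = P.map Y ⊗ₘ normalizedWithDensityKernel μ w := by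
    rw [hjoint, hmarg, withDensity_prod_eq_withDensity_compProd hw hfin]
  filter_upwards [condDistrib_ae_eq_of_measure_eq_compProd_of_measurable hY hX hcomp] with c hc
  rw [hc, normalizedWithDensityKernel_apply hw]

end JointDensity

theorem condDistrib_eq_normalized_weighted_prior_general
    {Ω S : Type*} [MeasurableSpace Ω] [MeasurableSpace S] [StandardBorelSpace S] [Nonempty S]
    (P : Measure Ω) [IsProbabilityMeasure P]
    (X : Ω → S) (hX : Measurable X)
    (μ : Measure S) (hμ : μ = P.map X)
    (E : Ω → ℝ) (hE : Measurable E)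
    (hindep : IndepFun E X P)
    (p : ℝ → ℝ) (hp_meas : Measurable p)
    (hE_law : P.map E = volume.withDensity (fun u => ENNReal.ofReal (p u)))
    (g : ℝ × S → ℝ) (g' : ℝ × S → ℝ) (gInv : ℝ × S → ℝ)
    (hg_meas : Measurable g) (hg'_meas : Measurable g') (hgInv_meas : Measurable gInv)
    (hg_deriv : ∀ x u, HasDerivAt (fun u => g (u, x)) (g' (u, x)) u)
    (hg'_pos : ∀ x u, 0 < g' (u, x))
    (hgInv_left : ∀ x u, gInv (g (u, x), x) = u)
    (hgInv_right : ∀ x c, g (gInv (c, x), x) = c)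
    (C : Ω → ℝ) (hC : C = fun ω => g (E ω, X ω)) :
    ∀ᵐ c ∂(P.map C),
      condDistrib X C P c =
        ((μ.withDensity
            (fun x => ENNReal.ofReal (p (gInv (c, x)) / g' (gInv (c, x), x)))) Set.univ)⁻¹ •
          μ.withDensity
            (fun x => ENNReal.ofReal (p (gInv (c, x)) / g' (gInv (c, x), x))) := by
  subst hμ hC
  set w : ℝ → S → ℝ≥0∞ :=
    fun c x => ENNReal.ofReal (p (gInv (c, x)) / g' (gInv (c, x), x))
  have hw : Measurable (Function.uncurry w) := ENNReal.measurable_ofReal.comp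
    ((hp_meas.comp hgInv_meas).div (hg'_meas.comp (hgInv_meas.prodMk measurable_snd)))
  have hEX : P.map (fun ω => (E ω, X ω)) = (P.map E).prod (P.map X) :=
    (indepFun_iff_map_prod_eq_prod_map_map hE.aemeasurable hX.aemeasurable).mp hindep
  have hfiber (x : S) :
      (P.map E).map (fun u => g (u, x)) = volume.withDensity fun c => w c x := by
    rw [hE_law]
    exact (map_withDensity_ofReal_eq_of_hasDerivAt (p := p) (finv := fun c => gInv (c, x))
      (hg_deriv x) (hg'_pos x) (hgInv_left x) (hgInv_right x) :)
  have hjoint : P.map (fun ω => (g (E ω, X ω), X ω))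
      = (volume.prod (P.map X)).withDensity (Function.uncurry w) := by
    rw [← map_prod_eq_withDensity_prod_of_map_eq hg_meas hw hfiber, ← hEX,
      Measure.map_map (hg_meas.prodMk measurable_snd) (hE.prodMk hX)]
    rfl
  exact condDistrib_ae_eq_of_map_eq_withDensity_prod hX (hg_meas.comp (hE.prodMk hX)) hw hjoint

/-- **Conditional distribution of the preceding variables given a continuous condition
(single-condition instance of the paper's Lemma 2).**
With `C = g (E, X)` as in the u-monotonic model, for `(law of C)`-almost every `c` the
regular conditional distribution of `X` given `C = c` is the normalization of
`μ.withDensity (x ↦ ω (x, c))` where `ω (x, c) = p (gInv (c, x)) / g' (gInv (c, x), x)`. -/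
theorem condDistrib_eq_normalized_weighted_prior
    {Ω S : Type*} [MeasurableSpace Ω] [MeasurableSpace S] [StandardBorelSpace S] [Nonempty S]
    (P : Measure Ω) [IsProbabilityMeasure P]
    (X : Ω → S) (hX : Measurable X)
    (μ : Measure S) (hμ : μ = P.map X)
    (E : Ω → ℝ) (hE : Measurable E)
    (hindep : IndepFun E X P)
    (p : ℝ → ℝ) (hp_meas : Measurable p) (hp_nonneg : ∀ x, 0 ≤ p x)
    (hE_law : P.map E = volume.withDensity (fun u => ENNReal.ofReal (p u)))
    (g : ℝ × S → ℝ) (g' : ℝ × S → ℝ) (gInv : ℝ × S → ℝ)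
    (hg_meas : Measurable g) (hg'_meas : Measurable g') (hgInv_meas : Measurable gInv)
    (hg_deriv : ∀ x u, HasDerivAt (fun u => g (u, x)) (g' (u, x)) u)
    (hg'_pos : ∀ x u, 0 < g' (u, x))
    (hg_mono : ∀ x, StrictMono (fun u => g (u, x)))
    (hg_bij : ∀ x, Function.Bijective (fun u => g (u, x)))
    (hgInv_left : ∀ x u, gInv (g (u, x), x) = u)
    (hgInv_right : ∀ x c, g (gInv (c, x), x) = c)
    (C : Ω → ℝ) (hC : C = fun ω => g (E ω, X ω)) :
    ∀ᵐ c ∂(P.map C),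
      condDistrib X C P c =
        ((μ.withDensity
            (fun x => ENNReal.ofReal (p (gInv (c, x)) / g' (gInv (c, x), x)))) Set.univ)⁻¹ •
          μ.withDensity
            (fun x => ENNReal.ofReal (p (gInv (c, x)) / g' (gInv (c, x), x))) :=
  condDistrib_eq_normalized_weighted_prior_general P X hX μ hμ E hE hindep p hp_meas hE_law g g'
    gInv hg_meas hg'_meas hgInv_meas hg_deriv hg'_pos hgInv_left hgInv_right C hC
end

section
/- Let (Ω, ℙ) be a probability space, S a standard Borel space, and let Ũ : Ω → S (with distribution μ), E₁ : Ω → ℝ and E₂ : Ω → ℝ be mutually independent, where E₁ and E₂ have Lebesgue densities p₁ and p₂ respectively. Let g₁ : ℝ × S → ℝ and g₂ : ℝ × S × ℝ → ℝ be measurable such that u ↦ g₁(u, x) and u ↦ g₂(u, x, c₁) are, for every fixed x and c₁, strictly increasing differentiable bijections of ℝ with everywhere positive derivatives. Define C₁ = g₁(E₁, Ũ) and C₂ = g₂(E₂, Ũ, C₁), and the weights ω₁(x, c₁) = p₁(g₁⁻¹(c₁, x)) / ∂ᵤg₁(g₁⁻¹(c₁, x), x) and ω₂(x, c₁, c₂)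 = p₂(g₂⁻¹(c₂, x, c₁)) / ∂ᵤg₂(g₂⁻¹(c₂, x, c₁), x, c₁). Then for (law of (C₁, C₂))-almost every (c₁, c₂), the regular conditional distribution of Ũ given (C₁, C₂) = (c₁, c₂) has density proportional to x ↦ ω₁(x, c₁) · ω₂(x, c₁, c₂) with respect to μ, i.e. it equals the normalization of μ.withDensity (x ↦ ω₁(x, c₁) ω₂(x, c₁, c₂)). -/
/-!
For fixed `x`, the map `(e₁, e₂) ↦ (c₁, c₂) = (g₁ (e₁, x), g₂ (e₂, x, c₁))` is a triangular
diffeomorphism of `ℝ²`, so two one-dimensional changes of variables show that the law of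
`(E₁, E₂)` is pushed to Lebesgue measure with density `ω₁ (x, c₁) * ω₂ (x, c₁, c₂)`. Since `Ũ` is
independent of `(E₁, E₂)`, the joint law of `((C₁, C₂), Ũ)` is `(Lebesgue ⊗ Lebesgue) ⊗ μ` with
density `W ((c₁, c₂), x) = ω₁ ω₂`. Bayes' formula then says that any joint law with a density
`W` with respect to a product `ν ⊗ μ` disintegrates over its first marginal into the kernel
`c ↦ (∫ W (c, ·) dμ)⁻¹ • μ.withDensity (W (c, ·))`.
-/

open MeasureTheory ProbabilityTheory

open scoped ENNReal

namespace MeasureTheory.Measure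

variable {α β γ : Type*} [MeasurableSpace α] [MeasurableSpace β] [MeasurableSpace γ]
  {μ : Measure α} {ν : Measure β} {W : α × β → ℝ≥0∞}

theorem prod_withDensity_apply [SFinite ν] (hW : Measurable W) {s : Set (α × β)}
    (hs : MeasurableSet s) :
    (μ.prod ν).withDensity W s =
      ∫⁻ a, ν.withDensity (fun b => W (a, b)) (Prod.mk a ⁻¹' s) ∂μ := by
  rw [withDensity_apply _ hs, ← lintegral_indicator hs,
    lintegral_prod _ (hW.indicator hs).aemeasurable]
  refine lintegral_congr fun a => ?_
  rw [withDensity_apply _ (measurable_prodMk_left hs),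
    ← lintegral_indicator (measurable_prodMk_left hs)]
  rfl

theorem map_fst_prod_withDensity [SFinite ν] (hW : Measurable W) :
    ((μ.prod ν).withDensity W).map Prod.fst =
      μ.withDensity fun a => ∫⁻ b, W (a, b) ∂ν := by
  ext s hs
  rw [map_apply measurable_fst hs, prod_withDensity_apply hW (measurable_fst hs),
    withDensity_apply _ hs, ← lintegral_indicator hs]
  refine lintegral_congr fun a => ?_
  by_cases ha : a ∈ s
  · rw [Set.indicator_of_mem ha, show Prod.mk a ⁻¹' (Prod.fst ⁻¹' s) = Set.univ from
      Set.eq_univ_of_forall fun _ => ha, withDensity_apply _ .univ, setLIntegral_univ]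
  · rw [Set.indicator_of_notMem ha, show Prod.mk a ⁻¹' (Prod.fst ⁻¹' s) = ∅ from
      Set.eq_empty_of_forall_notMem fun _ => ha, measure_empty]

theorem map_prodMk_eq_prod_withDensity [SFinite ν] {ν' : Measure γ} [SFinite ν']
    {Φ : α → β → γ} (hΦ : Measurable (Function.uncurry Φ)) {W : α × γ → ℝ≥0∞}
    (hW : Measurable W) (hfiber : ∀ a, ν.map (Φ a) = ν'.withDensity fun c => W (a, c)) :
    (μ.prod ν).map (fun z => (z.1, Φ z.1 z.2)) = (μ.prod ν').withDensity W := by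
  have hT : Measurable fun z : α × β => (z.1, Φ z.1 z.2) := measurable_fst.prodMk hΦ
  ext s hs
  rw [map_apply hT hs, prod_apply (hT hs), prod_withDensity_apply hW hs]
  refine lintegral_congr fun a => ?_
  rw [← hfiber a, map_apply hΦ.of_uncurry_left (measurable_prodMk_left hs)]
  rfl

theorem map_swap_prod_withDensity [SFinite μ] [SFinite ν] :
    ((μ.prod ν).withDensity W).map Prod.swap = (ν.prod μ).withDensity fun z => W z.swap := by
  ext s hs
  rw [map_apply measurable_swap hs, withDensity_apply _ (measurable_swap hs),
    withDensity_apply _ hs, ← lintegral_indicator (measurable_swap hs),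
    ← lintegral_indicator hs, ← lintegral_prod_swap]
  rfl

theorem map_triangular_eq_prod_withDensity {α₁ α₂ β₁ β₂ : Type*} [MeasurableSpace α₁]
    [MeasurableSpace α₂] [MeasurableSpace β₁] [MeasurableSpace β₂]
    {ρ₁ : Measure α₁} {ρ₂ : Measure α₂} {ν₁ : Measure β₁} {ν₂ : Measure β₂}
    [SFinite ρ₁] [SFinite ρ₂] [SFinite ν₂]
    {a : α₁ → β₁} {b : β₁ → α₂ → β₂} (ha : Measurable a) (hb : Measurable (Function.uncurry b))
    {w₁ : β₁ → ℝ≥0∞} {w₂ : β₁ × β₂ → ℝ≥0∞} (hw₁ : Measurable w₁) (hw₂ : Measurable w₂)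
    (h₁ : ρ₁.map a = ν₁.withDensity w₁)
    (h₂ : ∀ c, ρ₂.map (b c) = ν₂.withDensity fun c₂ => w₂ (c, c₂)) :
    (ρ₁.prod ρ₂).map (fun e => (a e.1, b (a e.1) e.2)) =
      (ν₁.prod ν₂).withDensity fun c => w₁ c.1 * w₂ c := by
  have hfst : (ρ₁.prod ρ₂).map (Prod.map a id) = (ν₁.withDensity w₁).prod ρ₂ := by
    rw [← map_prod_map _ _ ha measurable_id, h₁, map_id]
  have hsnd : Measurable fun z : β₁ × α₂ => (z.1, b z.1 z.2) := measurable_fst.prodMk hb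
  rw [show (fun e : α₁ × α₂ => (a e.1, b (a e.1) e.2)) =
      (fun z => (z.1, b z.1 z.2)) ∘ Prod.map a id from rfl,
    ← map_map hsnd (ha.prodMap measurable_id), hfst,
    map_prodMk_eq_prod_withDensity hb hw₂ h₂, prod_withDensity_left hw₁]
  exact (withDensity_mul _ (hw₁.comp measurable_fst) hw₂).symm

end MeasureTheory.Measure

namespace MeasureTheory

theorem map_withDensity_ofReal_of_hasDerivAt {g d gInv p : ℝ → ℝ}
    (hg : ∀ u, HasDerivAt g (d u) u) (hd : ∀ u, 0 < d u)
    (hleft : Function.LeftInverse gInv g) (hright : Function.RightInverse gInv g) :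
    (volume.withDensity fun u => ENNReal.ofReal (p u)).map g =
      volume.withDensity fun c => ENNReal.ofReal (p (gInv c) / d (gInv c)) := by
  have hg_meas : Measurable g :=
    (continuous_iff_continuousAt.2 fun u => (hg u).continuousAt).measurable
  ext s hs
  rw [Measure.map_apply hg_meas hs, withDensity_apply _ (hg_meas hs), withDensity_apply _ hs]
  conv_rhs => rw [← hright.surjective.image_preimage s]
  rw [lintegral_image_eq_lintegral_abs_deriv_mul (hg_meas hs)
    (fun u _ => (hg u).hasDerivWithinAt) hleft.injective.injOn]
  refine setLIntegral_congr_fun (hg_meas hs) fun u _ => ?_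
  rw [hleft u, abs_of_pos (hd u), ← ENNReal.ofReal_mul (hd u).le, mul_div_cancel₀ _ (hd u).ne']

theorem map_triangular_withDensity_ofReal_of_hasDerivAt
    {p₁ p₂ g₁ d₁ g₁Inv : ℝ → ℝ} {g₂ d₂ g₂Inv : ℝ → ℝ → ℝ}
    (hp₁ : Measurable p₁) (hp₁_nonneg : ∀ u, 0 ≤ p₁ u) (hp₂ : Measurable p₂)
    (hg₁ : ∀ u, HasDerivAt g₁ (d₁ u) u) (hd₁ : ∀ u, 0 < d₁ u) (hd₁_meas : Measurable d₁)
    (hg₁Inv_meas : Measurable g₁Inv) (hg₁_left : Function.LeftInverse g₁Inv g₁)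
    (hg₁_right : Function.RightInverse g₁Inv g₁)
    (hg₂ : ∀ c u, HasDerivAt (g₂ c) (d₂ c u) u) (hd₂ : ∀ c u, 0 < d₂ c u)
    (hg₂_meas : Measurable (Function.uncurry g₂)) (hd₂_meas : Measurable (Function.uncurry d₂))
    (hg₂Inv_meas : Measurable (Function.uncurry g₂Inv))
    (hg₂_left : ∀ c, Function.LeftInverse (g₂Inv c) (g₂ c))
    (hg₂_right : ∀ c, Function.RightInverse (g₂Inv c) (g₂ c)) :
    ((volume.withDensity fun u => ENNReal.ofReal (p₁ u)).prod
        (volume.withDensity fun u => ENNReal.ofReal (p₂ u))).map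
        (fun e => (g₁ e.1, g₂ (g₁ e.1) e.2)) =
      (volume.prod volume).withDensity fun c => ENNReal.ofReal
        (p₁ (g₁Inv c.1) / d₁ (g₁Inv c.1) * (p₂ (g₂Inv c.1 c.2) / d₂ c.1 (g₂Inv c.1 c.2))) := by
  have h₂ : ∀ c, (volume.withDensity fun u => ENNReal.ofReal (p₂ u)).map (g₂ c) =
      volume.withDensity fun u => ENNReal.ofReal (p₂ (g₂Inv c u) / d₂ c (g₂Inv c u)) :=
    fun c => map_withDensity_ofReal_of_hasDerivAt (hg₂ c) (hd₂ c) (hg₂_left c) (hg₂_right c)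
  rw [Measure.map_triangular_eq_prod_withDensity
    (w₂ := fun c => ENNReal.ofReal (p₂ (g₂Inv c.1 c.2) / d₂ c.1 (g₂Inv c.1 c.2)))
    (continuous_iff_continuousAt.2 fun u => (hg₁ u).continuousAt).measurable hg₂_meas
    (by fun_prop) (by fun_prop)
    (map_withDensity_ofReal_of_hasDerivAt hg₁ hd₁ hg₁_left hg₁_right) h₂]
  congr with c
  rw [← ENNReal.ofReal_mul (div_nonneg (hp₁_nonneg _) (hd₁ _).le)]

end MeasureTheory

namespace ProbabilityTheory

variable {α β : Type*} [MeasurableSpace α] [MeasurableSpace β]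

/-- At points `a` where `∫⁻ b, W (a, b) ∂μ` is `0` or `∞` this is the zero measure. -/
noncomputable def posteriorKernel (μ : Measure β) [SFinite μ] (W : α × β → ℝ≥0∞) :
    Kernel α β :=
  (Kernel.const α μ).withDensity fun a b => (∫⁻ b', W (a, b') ∂μ)⁻¹ * W (a, b)

variable {μ : Measure β} [SFinite μ] {W : α × β → ℝ≥0∞}

theorem posteriorKernel_apply (hW : Measurable W) (a : α) :
    posteriorKernel μ W a = (∫⁻ b, W (a, b) ∂μ)⁻¹ • μ.withDensity fun b => W (a, b) := by
  rw [posteriorKernel, Kernel.withDensity_apply _ (by fun_prop), Kernel.const_apply]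
  exact withDensity_smul _ (hW.comp measurable_prodMk_left)

theorem isFiniteKernel_posteriorKernel (hW : Measurable W) :
    IsFiniteKernel (posteriorKernel μ W) := by
  refine ⟨⟨1, ENNReal.one_lt_top, fun a => ?_⟩⟩
  rw [posteriorKernel_apply hW, Measure.smul_apply, withDensity_apply _ .univ,
    setLIntegral_univ, smul_eq_mul]
  exact ENNReal.inv_mul_le_one _

theorem prod_withDensity_eq_compProd_posteriorKernel {ν : Measure α} [SFinite ν]
    (hW : Measurable W) (hfin : ∀ᵐ a ∂ν, ∫⁻ b, W (a, b) ∂μ < ∞) :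
    (ν.prod μ).withDensity W =
      (ν.withDensity fun a => ∫⁻ b, W (a, b) ∂μ) ⊗ₘ posteriorKernel μ W := by
  have := isFiniteKernel_posteriorKernel (μ := μ) hW
  ext s hs
  rw [Measure.compProd_apply hs, Measure.prod_withDensity_apply hW hs,
    lintegral_withDensity_eq_lintegral_mul _ hW.lintegral_prod_right'
      (Kernel.measurable_kernel_prodMk_left hs)]
  refine lintegral_congr_ae ?_
  filter_upwards [hfin] with a ha
  set m := ∫⁻ b, W (a, b) ∂μ
  have hle : (μ.withDensity fun b => W (a, b)) (Prod.mk a ⁻¹' s) ≤ m :=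
    (measure_mono (Set.subset_univ _)).trans_eq <| by
      rw [withDensity_apply _ .univ, setLIntegral_univ]
  rw [Pi.mul_apply, posteriorKernel_apply hW, Measure.smul_apply, smul_eq_mul, ← mul_assoc]
  rcases eq_or_ne m 0 with hm | hm
  · rw [nonpos_iff_eq_zero.1 (hle.trans_eq hm), mul_zero]
  · rw [ENNReal.mul_inv_cancel hm ha.ne, one_mul]

theorem condDistrib_ae_eq_posteriorKernel {Ω : Type*} [MeasurableSpace Ω] {P : Measure Ω}
    [IsFiniteMeasure P] [StandardBorelSpace β] [Nonempty β] {X : Ω → α} {Y : Ω → β}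
    (hX : Measurable X) (hY : Measurable Y) {ν : Measure α} [SFinite ν] (hW : Measurable W)
    (hjoint : P.map (fun ω => (X ω, Y ω)) = (ν.prod μ).withDensity W) :
    condDistrib Y X P =ᵐ[P.map X] posteriorKernel μ W := by
  have := isFiniteKernel_posteriorKernel (μ := μ) hW
  have hmarg : P.map X = ν.withDensity fun a => ∫⁻ b, W (a, b) ∂μ := by
    rw [← Measure.map_fst_prod_withDensity hW, ← hjoint,
      Measure.map_map measurable_fst (hX.prodMk hY)]
    rfl
  have hfin : ∀ᵐ a ∂ν, ∫⁻ b, W (a, b) ∂μ < ∞ := by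
    refine ae_lt_top hW.lintegral_prod_right' ?_
    rw [← setLIntegral_univ, ← withDensity_apply _ .univ, ← hmarg]
    exact measure_ne_top _ _
  refine condDistrib_ae_eq_of_measure_eq_compProd X hY.aemeasurable ?_
  rw [hjoint, hmarg, prod_withDensity_eq_compProd_posteriorKernel hW hfin]

end ProbabilityTheory

theorem condDistrib_two_conditions_eq_normalized_weighted_prior_general
    {Ω S : Type*} [MeasurableSpace Ω] [MeasurableSpace S] [StandardBorelSpace S] [Nonempty S]
    (P : Measure Ω) [IsProbabilityMeasure P]
    (U : Ω → S) (hU : Measurable U)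
    (μ : Measure S) (hμ : μ = P.map U)
    (E₁ E₂ : Ω → ℝ) (hE₁ : Measurable E₁) (hE₂ : Measurable E₂)
    (p₁ p₂ : ℝ → ℝ)
    (hp₁_meas : Measurable p₁) (hp₁_nonneg : ∀ x, 0 ≤ p₁ x)
    (hp₂_meas : Measurable p₂)
    -- mutual independence of `U`, `E₁`, `E₂` together with the marginal laws:
    -- the joint law is the product of `μ` and the two Lebesgue densities
    (hjoint : P.map (fun ω => (U ω, E₁ ω, E₂ ω)) =
      μ.prod ((volume.withDensity (fun u => ENNReal.ofReal (p₁ u))).prod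
        (volume.withDensity (fun u => ENNReal.ofReal (p₂ u)))))
    (g₁ : ℝ × S → ℝ) (g₁' : ℝ × S → ℝ) (g₁Inv : ℝ × S → ℝ)
    (hg₁_meas : Measurable g₁) (hg₁'_meas : Measurable g₁') (hg₁Inv_meas : Measurable g₁Inv)
    (hg₁_deriv : ∀ x u, HasDerivAt (fun u => g₁ (u, x)) (g₁' (u, x)) u)
    (hg₁'_pos : ∀ x u, 0 < g₁' (u, x))
    (hg₁Inv_left : ∀ x u, g₁Inv (g₁ (u, x), x) = u)
    (hg₁Inv_right : ∀ x c, g₁ (g₁Inv (c, x), x) = c)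
    (g₂ : ℝ × S × ℝ → ℝ) (g₂' : ℝ × S × ℝ → ℝ) (g₂Inv : ℝ × S × ℝ → ℝ)
    (hg₂_meas : Measurable g₂) (hg₂'_meas : Measurable g₂') (hg₂Inv_meas : Measurable g₂Inv)
    (hg₂_deriv : ∀ x c₁ u, HasDerivAt (fun u => g₂ (u, x, c₁)) (g₂' (u, x, c₁)) u)
    (hg₂'_pos : ∀ x c₁ u, 0 < g₂' (u, x, c₁))
    (hg₂Inv_left : ∀ x c₁ u, g₂Inv (g₂ (u, x, c₁), x, c₁) = u)
    (hg₂Inv_right : ∀ x c₁ c₂, g₂ (g₂Inv (c₂, x, c₁), x, c₁) = c₂)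
    (C₁ C₂ : Ω → ℝ)
    (hC₁ : C₁ = fun ω => g₁ (E₁ ω, U ω))
    (hC₂ : C₂ = fun ω => g₂ (E₂ ω, U ω, C₁ ω)) :
    ∀ᵐ c ∂(P.map (fun ω => (C₁ ω, C₂ ω))),
      condDistrib U (fun ω => (C₁ ω, C₂ ω)) P c =
        ((μ.withDensity (fun x => ENNReal.ofReal
            ((p₁ (g₁Inv (c.1, x)) / g₁' (g₁Inv (c.1, x), x)) *
              (p₂ (g₂Inv (c.2, x, c.1)) / g₂' (g₂Inv (c.2, x, c.1), x, c.1))))) Set.univ)⁻¹ •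
          μ.withDensity (fun x => ENNReal.ofReal
            ((p₁ (g₁Inv (c.1, x)) / g₁' (g₁Inv (c.1, x), x)) *
              (p₂ (g₂Inv (c.2, x, c.1)) / g₂' (g₂Inv (c.2, x, c.1), x, c.1)))) := by
  have : IsProbabilityMeasure μ := hμ ▸ Measure.isProbabilityMeasure_map hU.aemeasurable
  subst hC₁ hC₂
  set ρ₁ := volume.withDensity fun u => ENNReal.ofReal (p₁ u)
  set ρ₂ := volume.withDensity fun u => ENNReal.ofReal (p₂ u)
  set W : (ℝ × ℝ) × S → ℝ≥0∞ := fun q => ENNReal.ofReal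
      ((p₁ (g₁Inv (q.1.1, q.2)) / g₁' (g₁Inv (q.1.1, q.2), q.2)) *
        (p₂ (g₂Inv (q.1.2, q.2, q.1.1)) / g₂' (g₂Inv (q.1.2, q.2, q.1.1), q.2, q.1.1)))
  have hW : Measurable W := by fun_prop
  have hfiber (x : S) : (ρ₁.prod ρ₂).map (fun e => (g₁ (e.1, x), g₂ (e.2, x, g₁ (e.1, x)))) =
      (volume.prod volume).withDensity fun c => W (c, x) :=
    map_triangular_withDensity_ofReal_of_hasDerivAt (g₁ := fun u => g₁ (u, x))
      (d₁ := fun u => g₁' (u, x)) (g₁Inv := fun c => g₁Inv (c, x))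
      (g₂ := fun c₁ u => g₂ (u, x, c₁)) (d₂ := fun c₁ u => g₂' (u, x, c₁))
      (g₂Inv := fun c₁ c => g₂Inv (c, x, c₁))
      hp₁_meas hp₁_nonneg hp₂_meas (hg₁_deriv x) (hg₁'_pos x) (by fun_prop) (by fun_prop)
      (hg₁Inv_left x) (hg₁Inv_right x) (hg₂_deriv x) (hg₂'_pos x) (by fun_prop) (by fun_prop)
      (by fun_prop) (hg₂Inv_left x) (hg₂Inv_right x)
  have hT : Measurable fun z : S × ℝ × ℝ =>
      (z.1, g₁ (z.2.1, z.1), g₂ (z.2.2, z.1, g₁ (z.2.1, z.1))) := by fun_prop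
  have hlaw : P.map (fun ω => ((g₁ (E₁ ω, U ω), g₂ (E₂ ω, U ω, g₁ (E₁ ω, U ω))), U ω)) =
      ((volume.prod volume).prod μ).withDensity W := calc
    _ = ((P.map fun ω => (U ω, E₁ ω, E₂ ω)).map
          fun z => (z.1, g₁ (z.2.1, z.1), g₂ (z.2.2, z.1, g₁ (z.2.1, z.1)))).map Prod.swap := by
        rw [Measure.map_map measurable_swap hT,
          Measure.map_map (measurable_swap.comp hT) (by fun_prop)]
        rfl
    _ = ((μ.prod (volume.prod volume)).withDensity fun z => W z.swap).map Prod.swap := by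
        rw [hjoint, Measure.map_prodMk_eq_prod_withDensity (W := fun z => W z.swap)
          (by fun_prop) (by fun_prop) hfiber]
    _ = _ := Measure.map_swap_prod_withDensity
  filter_upwards [condDistrib_ae_eq_posteriorKernel (by fun_prop) hU hW hlaw]
    with c hc
  rw [hc, posteriorKernel_apply hW, withDensity_apply _ .univ, setLIntegral_univ]

/-- **Conditional distribution of the global background variables given two continuous
conditions (two-condition instance of the paper's Lemma 2).**
With `C₁ = g₁ (E₁, Ũ)` and `C₂ = g₂ (E₂, Ũ, C₁)` as in the u-monotonic model
(`Ũ, E₁, E₂` mutually independent, expressed by the joint law being the product of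
the marginal laws), for `(law of (C₁, C₂))`-almost every `(c₁, c₂)` the regular
conditional distribution of `Ũ` given `(C₁, C₂) = (c₁, c₂)` is the normalization of
`μ.withDensity (x ↦ ω₁ (x, c₁) * ω₂ (x, c₁, c₂))`. -/
theorem condDistrib_two_conditions_eq_normalized_weighted_prior
    {Ω S : Type*} [MeasurableSpace Ω] [MeasurableSpace S] [StandardBorelSpace S] [Nonempty S]
    (P : Measure Ω) [IsProbabilityMeasure P]
    (U : Ω → S) (hU : Measurable U)
    (μ : Measure S) (hμ : μ = P.map U)
    (E₁ E₂ : Ω → ℝ) (hE₁ : Measurable E₁) (hE₂ : Measurable E₂)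
    (p₁ p₂ : ℝ → ℝ)
    (hp₁_meas : Measurable p₁) (hp₁_nonneg : ∀ x, 0 ≤ p₁ x)
    (hp₂_meas : Measurable p₂) (hp₂_nonneg : ∀ x, 0 ≤ p₂ x)
    -- mutual independence of `U`, `E₁`, `E₂` together with the marginal laws:
    -- the joint law is the product of `μ` and the two Lebesgue densities
    (hjoint : P.map (fun ω => (U ω, E₁ ω, E₂ ω)) =
      μ.prod ((volume.withDensity (fun u => ENNReal.ofReal (p₁ u))).prod
        (volume.withDensity (fun u => ENNReal.ofReal (p₂ u)))))
    (g₁ : ℝ × S → ℝ) (g₁' : ℝ × S → ℝ) (g₁Inv : ℝ × S → ℝ)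
    (hg₁_meas : Measurable g₁) (hg₁'_meas : Measurable g₁') (hg₁Inv_meas : Measurable g₁Inv)
    (hg₁_deriv : ∀ x u, HasDerivAt (fun u => g₁ (u, x)) (g₁' (u, x)) u)
    (hg₁'_pos : ∀ x u, 0 < g₁' (u, x))
    (hg₁_mono : ∀ x, StrictMono (fun u => g₁ (u, x)))
    (hg₁_bij : ∀ x, Function.Bijective (fun u => g₁ (u, x)))
    (hg₁Inv_left : ∀ x u, g₁Inv (g₁ (u, x), x) = u)
    (hg₁Inv_right : ∀ x c, g₁ (g₁Inv (c, x), x) = c)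
    (g₂ : ℝ × S × ℝ → ℝ) (g₂' : ℝ × S × ℝ → ℝ) (g₂Inv : ℝ × S × ℝ → ℝ)
    (hg₂_meas : Measurable g₂) (hg₂'_meas : Measurable g₂') (hg₂Inv_meas : Measurable g₂Inv)
    (hg₂_deriv : ∀ x c₁ u, HasDerivAt (fun u => g₂ (u, x, c₁)) (g₂' (u, x, c₁)) u)
    (hg₂'_pos : ∀ x c₁ u, 0 < g₂' (u, x, c₁))
    (hg₂_mono : ∀ x c₁, StrictMono (fun u => g₂ (u, x, c₁)))
    (hg₂_bij : ∀ x c₁, Function.Bijective (fun u => g₂ (u, x, c₁)))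
    (hg₂Inv_left : ∀ x c₁ u, g₂Inv (g₂ (u, x, c₁), x, c₁) = u)
    (hg₂Inv_right : ∀ x c₁ c₂, g₂ (g₂Inv (c₂, x, c₁), x, c₁) = c₂)
    (C₁ C₂ : Ω → ℝ)
    (hC₁ : C₁ = fun ω => g₁ (E₁ ω, U ω))
    (hC₂ : C₂ = fun ω => g₂ (E₂ ω, U ω, C₁ ω)) :
    ∀ᵐ c ∂(P.map (fun ω => (C₁ ω, C₂ ω))),
      condDistrib U (fun ω => (C₁ ω, C₂ ω)) P c =
        ((μ.withDensity (fun x => ENNReal.ofReal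
            ((p₁ (g₁Inv (c.1, x)) / g₁' (g₁Inv (c.1, x), x)) *
              (p₂ (g₂Inv (c.2, x, c.1)) / g₂' (g₂Inv (c.2, x, c.1), x, c.1))))) Set.univ)⁻¹ •
          μ.withDensity (fun x => ENNReal.ofReal
            ((p₁ (g₁Inv (c.1, x)) / g₁' (g₁Inv (c.1, x), x)) *
              (p₂ (g₂Inv (c.2, x, c.1)) / g₂' (g₂Inv (c.2, x, c.1), x, c.1)))) :=
  condDistrib_two_conditions_eq_normalized_weighted_prior_general P U hU μ hμ E₁ E₂ hE₁ hE₂ p₁ p₂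
    hp₁_meas hp₁_nonneg hp₂_meas hjoint g₁ g₁' g₁Inv hg₁_meas hg₁'_meas hg₁Inv_meas hg₁_deriv
    hg₁'_pos hg₁Inv_left hg₁Inv_right g₂ g₂' g₂Inv hg₂_meas hg₂'_meas hg₂Inv_meas hg₂_deriv hg₂'_pos
    hg₂Inv_left hg₂Inv_right C₁ C₂ hC₁ hC₂
end

section
/- Let (Ω, ℙ) be a probability space, S a standard Borel space, X : Ω → S a random element with distribution μ, f : S → ℝ measurable, and E : Ω → ℝ a random variable independent of X whose distribution has density p with respect to Lebesgue measure. Define the additive noise model C = f(X) + E. Then for (law of C)-almost every c ∈ ℝ, the regular conditional distribution of X given C = c has density proportional to x ↦ p(c − f(x)) with respect to μ: condDistrib X C ℙ (c) = (μ.withDensity (x ↦ p(c − f(x))) univ)⁻¹ • μ.withDensity (x ↦ p(c − f(x))). -/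
/-!
The joint law of `(C, X)` is the image of `μ ⊗ law(E)` under `(x, e) ↦ (f x + e, x)`; by
translation invariance of Lebesgue measure it has density `(c, x) ↦ p (c - f x)` with respect to
`volume ⊗ μ`. Whenever a joint measure has a density `w` with respect to a product `ν ⊗ μ`, the
kernel `a ↦ (∫⁻ w a ∂μ)⁻¹ • μ.withDensity (w a)` disintegrates it (Bayes' formula), so by
uniqueness of disintegrations it agrees a.e. with the conditional kernel.
-/

open MeasureTheory ProbabilityTheory Function
open scoped ENNReal

section Bayes

variable {α β : Type*} [MeasurableSpace α] [MeasurableSpace β]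

theorem MeasureTheory.lintegral_mul_inv_lintegral_mul_ae_eq {μ : Measure β} {f : β → ℝ≥0∞}
    (hf : AEMeasurable f μ) (h_ne_top : ∫⁻ y, f y ∂μ ≠ ∞) :
    (fun y => (∫⁻ y, f y ∂μ) * ((∫⁻ y, f y ∂μ)⁻¹ * f y)) =ᵐ[μ] f := by
  rcases eq_or_ne (∫⁻ y, f y ∂μ) 0 with h_zero | h_zero
  · filter_upwards [(lintegral_eq_zero_iff' hf).1 h_zero] with y hy
    simp [hy]
  · exact ae_of_all _ fun y => by
      simp only [← mul_assoc, ENNReal.mul_inv_cancel h_zero h_ne_top, one_mul]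

theorem MeasureTheory.Measure.fst_withDensity_prod (ν : Measure α) [SFinite ν] (μ : Measure β)
    [SFinite μ] {w : α → β → ℝ≥0∞} (hw : Measurable (uncurry w)) :
    ((ν.prod μ).withDensity (uncurry w)).fst = ν.withDensity fun a => ∫⁻ y, w a y ∂μ := by
  ext s hs
  rw [Measure.fst_apply hs, withDensity_apply _ (measurable_fst hs), withDensity_apply _ hs,
    ← Set.prod_univ, ← Measure.prod_restrict, Measure.restrict_univ,
    lintegral_prod _ hw.aemeasurable]
  rfl

theorem MeasureTheory.measurable_uncurry_inv_lintegral_mul {μ : Measure β} [SFinite μ]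
    {w : α → β → ℝ≥0∞} (hw : Measurable (uncurry w)) :
    Measurable (uncurry fun a b => (∫⁻ y, w a y ∂μ)⁻¹ * w a b) :=
  (hw.lintegral_prod_right'.inv.comp measurable_fst).mul hw

namespace ProbabilityTheory.Kernel

noncomputable def normalizedWithDensity (μ : Measure β) [SFinite μ] (w : α → β → ℝ≥0∞) :
    Kernel α β :=
  (Kernel.const α μ).withDensity fun a b => (∫⁻ y, w a y ∂μ)⁻¹ * w a b

variable {μ : Measure β} [SFinite μ] {w : α → β → ℝ≥0∞}

theorem normalizedWithDensity_apply (hw : Measurable (uncurry w)) (a : α) :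
    normalizedWithDensity μ w a = (μ.withDensity (w a) Set.univ)⁻¹ • μ.withDensity (w a) := by
  rw [normalizedWithDensity, Kernel.withDensity_apply _ (measurable_uncurry_inv_lintegral_mul hw),
    Kernel.const_apply, withDensity_apply _ MeasurableSet.univ, setLIntegral_univ,
    ← withDensity_smul _ hw.of_uncurry_left]
  rfl

theorem isFiniteKernel_normalizedWithDensity (hw : Measurable (uncurry w)) :
    IsFiniteKernel (normalizedWithDensity μ w) :=
  ⟨⟨1, ENNReal.one_lt_top, fun a => by
    rw [normalizedWithDensity_apply hw, Measure.smul_apply, smul_eq_mul]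
    exact ENNReal.inv_mul_le_one _⟩⟩

end ProbabilityTheory.Kernel

open ProbabilityTheory.Kernel in
theorem MeasureTheory.Measure.withDensity_prod_eq_fst_compProd (ν : Measure α) [SFinite ν]
    (μ : Measure β) [SFinite μ] {w : α → β → ℝ≥0∞} (hw : Measurable (uncurry w))
    [IsFiniteMeasure ((ν.prod μ).withDensity (uncurry w))] :
    (ν.prod μ).withDensity (uncurry w) =
      ((ν.prod μ).withDensity (uncurry w)).fst ⊗ₘ normalizedWithDensity μ w := by
  have := isFiniteKernel_normalizedWithDensity (μ := μ) hw
  unfold normalizedWithDensity at this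
  set g : α → ℝ≥0∞ := fun a => ∫⁻ y, w a y ∂μ
  have hg : Measurable g := hw.lintegral_prod_right'
  -- `∫⁻ g ∂ν` is the (finite) total mass of the joint measure
  have hg_ne_top : ∀ᵐ a ∂ν, g a ≠ ∞ := by
    refine (ae_lt_top hg ?_).mono fun a ha => ha.ne
    rw [← setLIntegral_univ, ← withDensity_apply _ MeasurableSet.univ,
      ← Measure.fst_withDensity_prod ν μ hw]
    exact measure_ne_top _ _
  have h_cancel : ∀ᵐ q ∂ν.prod μ, g q.1 * ((g q.1)⁻¹ * w q.1 q.2) = w q.1 q.2 :=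
    (Measure.ae_prod_iff_ae_ae (measurableSet_eq_fun (by fun_prop) hw)).2 <|
      hg_ne_top.mono fun a ha =>
        lintegral_mul_inv_lintegral_mul_ae_eq hw.of_uncurry_left.aemeasurable ha
  rw [Measure.fst_withDensity_prod ν μ hw, normalizedWithDensity, Measure.compProd_withDensity
    (measurable_uncurry_inv_lintegral_mul hw), Measure.compProd_const, prod_withDensity_left hg]
  exact (withDensity_congr_ae (h_cancel.mono fun q hq => hq.symm)).trans
    (withDensity_mul _ (hg.comp measurable_fst) (measurable_uncurry_inv_lintegral_mul hw))

theorem MeasureTheory.Measure.condKernel_ae_eq_of_eq_withDensity_prod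
    [StandardBorelSpace β] [Nonempty β] {ρ : Measure (α × β)} [IsFiniteMeasure ρ]
    (ν : Measure α) [SFinite ν] (μ : Measure β) [SFinite μ] {w : α → β → ℝ≥0∞}
    (hw : Measurable (uncurry w)) (hρ : ρ = (ν.prod μ).withDensity (uncurry w)) :
    ∀ᵐ a ∂ρ.fst, ρ.condKernel a = (μ.withDensity (w a) Set.univ)⁻¹ • μ.withDensity (w a) := by
  have := Kernel.isFiniteKernel_normalizedWithDensity (μ := μ) hw
  subst hρ
  filter_upwards [eq_condKernel_of_measure_eq_compProd _
    (Measure.withDensity_prod_eq_fst_compProd ν μ hw)] with a ha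
  rw [← ha, Kernel.normalizedWithDensity_apply hw]

end Bayes

theorem MeasurableEquiv.map_withDensity {α β : Type*} [MeasurableSpace α] [MeasurableSpace β]
    (e : α ≃ᵐ β) (μ : Measure α) (h : α → ℝ≥0∞) :
    (μ.withDensity h).map e = (μ.map e).withDensity (h ∘ e.symm) := by
  ext s hs
  rw [e.map_apply, withDensity_apply _ (e.measurable hs), withDensity_apply _ hs, e.restrict_map,
    lintegral_map_equiv]
  simp

section AdditiveNoise

variable {S G : Type*} [MeasurableSpace S] [MeasurableSpace G] [AddGroup G] [MeasurableAdd₂ G]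
  [MeasurableNeg G] {f : S → G}

def MeasurableEquiv.addNoise (f : S → G) (hf : Measurable f) : S × G ≃ᵐ G × S where
  toFun q := (f q.1 + q.2, q.1)
  invFun q := (q.2, -f q.2 + q.1)
  left_inv q := by simp
  right_inv q := by simp
  measurable_toFun := ((hf.comp measurable_fst).add measurable_snd).prodMk measurable_fst
  measurable_invFun := measurable_snd.prodMk ((hf.comp measurable_snd).neg.add measurable_fst)

theorem MeasurableEquiv.measurePreserving_addNoise (hf : Measurable f) (μ : Measure S) [SFinite μ]
    (ν : Measure G) [SFinite ν] [ν.IsAddLeftInvariant] :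
    MeasurePreserving (addNoise f hf) (μ.prod ν) (ν.prod μ) :=
  Measure.measurePreserving_swap.comp <| (MeasurePreserving.id μ).skew_product
    ((hf.comp measurable_fst).add measurable_snd)
    (ae_of_all _ fun x => map_add_left_eq_self ν (f x))

theorem MeasurableEquiv.map_addNoise_prod_withDensity (hf : Measurable f) (μ : Measure S)
    [SFinite μ] (ν : Measure G) [SFinite ν] [ν.IsAddLeftInvariant] {p : G → ℝ≥0∞}
    (hp : Measurable p) :
    (μ.prod (ν.withDensity p)).map (addNoise f hf) =
      (ν.prod μ).withDensity fun q => p (-f q.2 + q.1) := by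
  rw [prod_withDensity_right hp, map_withDensity, (measurePreserving_addNoise hf μ ν).map_eq]
  rfl

end AdditiveNoise

theorem condDistrib_additive_noise_eq_normalized_weighted_prior_general
    {Ω S : Type*} [MeasurableSpace Ω] [MeasurableSpace S] [StandardBorelSpace S] [Nonempty S]
    (P : Measure Ω) [IsProbabilityMeasure P]
    (X : Ω → S) (hX : Measurable X)
    (μ : Measure S) (hμ : μ = P.map X)
    (f : S → ℝ) (hf : Measurable f)
    (E : Ω → ℝ) (hE : Measurable E)
    (hindep : IndepFun E X P)
    (p : ℝ → ℝ) (hp_meas : Measurable p)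
    (hE_law : P.map E = volume.withDensity (fun u => ENNReal.ofReal (p u)))
    (C : Ω → ℝ) (hC : C = fun ω => f (X ω) + E ω) :
    ∀ᵐ c ∂(P.map C),
      condDistrib X C P c =
        ((μ.withDensity (fun x => ENNReal.ofReal (p (c - f x)))) Set.univ)⁻¹ •
          μ.withDensity (fun x => ENNReal.ofReal (p (c - f x))) := by
  subst hμ hC
  have h_cause_noise : P.map (fun ω => (X ω, E ω)) = (P.map X).prod (P.map E) :=
    (indepFun_iff_map_prod_eq_prod_map_map hX.aemeasurable hE.aemeasurable).1 hindep.symm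
  have h_joint : P.map (fun ω => (f (X ω) + E ω, X ω)) =
      (volume.prod (P.map X)).withDensity
        (uncurry fun c x => ENNReal.ofReal (p (c - f x))) := by
    calc P.map (fun ω => (f (X ω) + E ω, X ω))
        = (P.map fun ω => (X ω, E ω)).map (MeasurableEquiv.addNoise f hf) := by
          rw [Measure.map_map (MeasurableEquiv.addNoise f hf).measurable (hX.prodMk hE)]
          rfl
      _ = _ := by
          rw [h_cause_noise, hE_law, MeasurableEquiv.map_addNoise_prod_withDensity hf _ volume
            (by fun_prop)]
          simp only [neg_add_eq_sub]
          rfl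
  have h_weight : Measurable (uncurry fun c x => ENNReal.ofReal (p (c - f x))) := by fun_prop
  have h_bayes :=
    Measure.condKernel_ae_eq_of_eq_withDensity_prod volume (P.map X) h_weight h_joint
  rw [Measure.fst_map_prodMk hX] at h_bayes
  filter_upwards [h_bayes] with c hc
  rw [condDistrib, hc]

/-- **Additive-noise special case.** With `C = f (X) + E`, where `E` is independent of `X`
and has Lebesgue density `p`, for `(law of C)`-almost every `c` the regular conditional
distribution of `X` given `C = c` has density proportional to `x ↦ p (c - f x)` with
respect to `μ`, the law of `X`. -/
theorem condDistrib_additive_noise_eq_normalized_weighted_prior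
    {Ω S : Type*} [MeasurableSpace Ω] [MeasurableSpace S] [StandardBorelSpace S] [Nonempty S]
    (P : Measure Ω) [IsProbabilityMeasure P]
    (X : Ω → S) (hX : Measurable X)
    (μ : Measure S) (hμ : μ = P.map X)
    (f : S → ℝ) (hf : Measurable f)
    (E : Ω → ℝ) (hE : Measurable E)
    (hindep : IndepFun E X P)
    (p : ℝ → ℝ) (hp_meas : Measurable p) (hp_nonneg : ∀ x, 0 ≤ p x)
    (hE_law : P.map E = volume.withDensity (fun u => ENNReal.ofReal (p u)))
    (C : Ω → ℝ) (hC : C = fun ω => f (X ω) + E ω) :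
    ∀ᵐ c ∂(P.map C),
      condDistrib X C P c =
        ((μ.withDensity (fun x => ENNReal.ofReal (p (c - f x)))) Set.univ)⁻¹ •
          μ.withDensity (fun x => ENNReal.ofReal (p (c - f x))) :=
  condDistrib_additive_noise_eq_normalized_weighted_prior_general P X hX μ hμ f hf E hE hindep p
    hp_meas hE_law C hC
end

section
/- Let (Ω, ℙ) be a probability space, S a standard Borel space, X : Ω → S a random element with distribution μ, and E : Ω → ℝ a random variable independent of X whose distribution has density p with respect to Lebesgue measure. Let g : ℝ × S → ℝ be measurable such that for each x ∈ S the map u ↦ g(u, x) is a strictly increasing differentiable bijection of ℝ with everywhere positive derivative; write g⁻¹(·, x) for its inverse, set C = g(E, X) and ω(x, c) = p(g⁻¹(c, x)) / ∂ᵤg(g⁻¹(c, x), x). Let h : S → T be a measurable map into a standard Borel space T (the intervened structural functions producing the counterfactual output from the background variables). Then for (law of C)-almost every c, the regular conditional distribution of h(X) given C = c equals the pushforward under h of the normalized reweighted prior: condDistrib (h ∘ X) C ℙ (c) = Measure.map h ((μ.withDensity (x ↦ ω(x, c)) univ)⁻¹ • μ.withDensity (x ↦ ω(x, c))). -/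
/-!
Independence makes the joint law of `(E, X)` the product of `P.map E` and `μ`. For fixed `x`, the
one-dimensional change of variables `c = g (u, x)` turns the density `p` of `E` into
`c ↦ ω (x, c)`, so the joint law of `(C, X)` has density `ω` with respect to `volume ⊗ μ`.
Bayes' rule for a joint density then identifies the conditional law of `X` given `C = c` with
`μ` reweighted by `ω (·, c)` and normalized; the normalization is finite and nonzero for a.e. `c`
because the law of `C` has density `c ↦ ∫ ω (x, c) dμ(x)`. Conditioning commutes with pushing
forward along `h`.
-/

open MeasureTheory ProbabilityTheory

open scoped ENNReal

theorem map_withDensity_ofReal_eq_of_hasDerivAt_s5 {φ φ' ψ : ℝ → ℝ} (p : ℝ → ℝ)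
    (hφ : ∀ u, HasDerivAt φ (φ' u) u) (hφ' : ∀ u, φ' u ≠ 0)
    (hψφ : ∀ u, ψ (φ u) = u) (hφψ : ∀ c, φ (ψ c) = c) :
    (volume.withDensity fun u => ENNReal.ofReal (p u)).map φ =
      volume.withDensity fun c => ENNReal.ofReal (p (ψ c) / |φ' (ψ c)|) := by
  have hφ_meas : Measurable φ :=
    (continuous_iff_continuousAt.2 fun u => (hφ u).continuousAt).measurable
  ext B hB
  have hpre : MeasurableSet (φ ⁻¹' B) := hφ_meas hB
  rw [Measure.map_apply hφ_meas hB, withDensity_apply _ hB, withDensity_apply _ hpre]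
  conv_rhs => rw [← Set.image_preimage_eq B (Function.RightInverse.surjective hφψ)]
  rw [lintegral_image_eq_lintegral_abs_deriv_mul hpre (fun u _ => (hφ u).hasDerivWithinAt)
      (Function.LeftInverse.injective hψφ).injOn]
  refine setLIntegral_congr_fun hpre fun u _ => ?_
  rw [hψφ, ← ENNReal.ofReal_mul (abs_nonneg _), mul_div_cancel₀ _ (abs_ne_zero.2 (hφ' u))]

theorem map_prodMk_eq_withDensity_prod {α β γ : Type*} [MeasurableSpace α] [MeasurableSpace β]
    [MeasurableSpace γ] {ν : Measure α} {μ : Measure β} {ξ : Measure γ} [SFinite ν] [SFinite μ]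
    [SFinite ξ] {G : α × β → γ} {W : γ × β → ℝ≥0∞} (hG : Measurable G) (hW : Measurable W)
    (hG_section : ∀ b, ν.map (fun a => G (a, b)) = ξ.withDensity fun c => W (c, b)) :
    (ν.prod μ).map (fun q => (G q, q.2)) = (ξ.prod μ).withDensity W := by
  refine Measure.ext_of_lintegral _ fun F hF => ?_
  calc ∫⁻ z, F z ∂(ν.prod μ).map (fun q => (G q, q.2))
      = ∫⁻ b, ∫⁻ a, F (G (a, b), b) ∂ν ∂μ := by
        rw [lintegral_map hF (hG.prodMk measurable_snd),
          lintegral_prod_symm (fun q => F (G q, q.2))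
            (hF.comp (hG.prodMk measurable_snd)).aemeasurable]
    _ = ∫⁻ b, ∫⁻ c, W (c, b) * F (c, b) ∂ξ ∂μ := by
        refine lintegral_congr fun b => ?_
        rw [← lintegral_map (f := fun c => F (c, b)) (g := fun a => G (a, b))
            (hF.comp measurable_prodMk_right) (hG.comp measurable_prodMk_right), hG_section]
        exact lintegral_withDensity_eq_lintegral_mul _ (hW.comp measurable_prodMk_right)
          (hF.comp measurable_prodMk_right)
    _ = ∫⁻ z, F z ∂(ξ.prod μ).withDensity W := by
        rw [lintegral_withDensity_eq_lintegral_mul _ hW hF,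
          lintegral_prod_symm _ (hW.mul hF).aemeasurable]
        rfl

section NormalizedDensityKernel

variable {α β : Type*} [MeasurableSpace α] [MeasurableSpace β] {ν : Measure α} {μ : Measure β}
  [SFinite μ] {f : α × β → ℝ≥0∞}

-- Where the mass `∫⁻ b, f (a, b) ∂μ` is `0` or `∞` this is the zero measure, so the kernel is
-- finite everywhere and needs no fallback on that null set.
variable (μ f) in
noncomputable def normalizedDensityKernel : Kernel α β :=
  (Kernel.const α μ).withDensity fun a b => (∫⁻ b', f (a, b') ∂μ)⁻¹ * f (a, b)

lemma normalizedDensityKernel_apply (hf : Measurable f) (a : α) :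
    normalizedDensityKernel μ f a =
      (μ.withDensity (fun b => f (a, b)) Set.univ)⁻¹ • μ.withDensity (fun b => f (a, b)) := by
  have hk : Measurable (Function.uncurry fun a b => (∫⁻ b', f (a, b') ∂μ)⁻¹ * f (a, b)) :=
    (hf.lintegral_prod_right'.inv.comp measurable_fst).mul hf
  rw [normalizedDensityKernel, Kernel.withDensity_apply _ hk, Kernel.const_apply,
    withDensity_apply _ MeasurableSet.univ, setLIntegral_univ]
  exact withDensity_smul _ (hf.comp measurable_prodMk_left)

lemma isFiniteKernel_normalizedDensityKernel (hf : Measurable f) :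
    IsFiniteKernel (normalizedDensityKernel μ f) :=
  ⟨⟨1, ENNReal.one_lt_top, fun a => by
    rw [normalizedDensityKernel_apply hf, Measure.smul_apply, smul_eq_mul]
    exact ENNReal.inv_mul_le_one _⟩⟩

variable [SFinite ν]

lemma fst_withDensity_prod (hf : Measurable f) :
    ((ν.prod μ).withDensity f).fst = ν.withDensity fun a => ∫⁻ b, f (a, b) ∂μ := by
  ext s hs
  rw [Measure.fst_apply hs, withDensity_apply _ (measurable_fst hs), withDensity_apply _ hs,
    ← Set.prod_univ, ← Measure.prod_restrict, Measure.restrict_univ,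
    lintegral_prod _ hf.aemeasurable]

lemma withDensity_prod_eq_compProd_normalizedDensityKernel (hf : Measurable f)
    (hfin : ∀ᵐ a ∂ν, ∫⁻ b, f (a, b) ∂μ ≠ ∞) :
    (ν.prod μ).withDensity f =
      ν.withDensity (fun a => ∫⁻ b, f (a, b) ∂μ) ⊗ₘ normalizedDensityKernel μ f := by
  have hm : Measurable fun a => ∫⁻ b, f (a, b) ∂μ := hf.lintegral_prod_right'
  have hm₁ : Measurable fun p : α × β => ∫⁻ b, f (p.1, b) ∂μ := hm.comp measurable_fst
  have hk : Measurable fun p : α × β => (∫⁻ b, f (p.1, b) ∂μ)⁻¹ * f p := hm₁.inv.mul hf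
  have hcancel : (fun p : α × β => ∫⁻ b, f (p.1, b) ∂μ) *
      (fun p => (∫⁻ b, f (p.1, b) ∂μ)⁻¹ * f p) =ᵐ[ν.prod μ] f := by
    refine (Measure.ae_prod_iff_ae_ae (measurableSet_eq_fun (hm₁.mul hk) hf)).2 ?_
    filter_upwards [hfin] with a ha
    by_cases h0 : ∫⁻ b, f (a, b) ∂μ = 0
    · filter_upwards [(lintegral_eq_zero_iff (hf.comp measurable_prodMk_left)).1 h0] with b hb
      rw [Function.comp_apply, Pi.zero_apply] at hb
      simp only [Pi.mul_apply, hb, mul_zero]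
    · exact ae_of_all _ fun b => by
        rw [Pi.mul_apply, ← mul_assoc, ENNReal.mul_inv_cancel h0 ha, one_mul]
  have := isFiniteKernel_normalizedDensityKernel (μ := μ) hf
  rw [normalizedDensityKernel] at this ⊢
  rw [Measure.compProd_withDensity hk, Measure.compProd_const, prod_withDensity_left hm,
    ← withDensity_mul _ hm₁ hk]
  exact (withDensity_congr_ae hcancel).symm

theorem condDistrib_ae_eq_of_map_prodMk_eq_withDensity_prod {Ω : Type*} [MeasurableSpace Ω]
    [StandardBorelSpace β] [Nonempty β] {P : Measure Ω} [IsFiniteMeasure P] {Z : Ω → α}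
    {Y : Ω → β} (hY : Measurable Y) (hf : Measurable f)
    (hZY : P.map (fun ω => (Z ω, Y ω)) = (ν.prod μ).withDensity f) :
    ∀ᵐ a ∂P.map Z, condDistrib Y Z P a =
      (μ.withDensity (fun b => f (a, b)) Set.univ)⁻¹ • μ.withDensity (fun b => f (a, b)) := by
  have hZ_law : P.map Z = ν.withDensity fun a => ∫⁻ b, f (a, b) ∂μ := by
    rw [← fst_withDensity_prod hf, ← hZY, Measure.fst_map_prodMk hY]
  have hfin : ∀ᵐ a ∂ν, ∫⁻ b, f (a, b) ∂μ ≠ ∞ := by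
    refine (ae_lt_top hf.lintegral_prod_right' ?_).mono fun _ => LT.lt.ne
    rw [← setLIntegral_univ, ← withDensity_apply _ MeasurableSet.univ, ← hZ_law]
    exact measure_ne_top _ _
  have := isFiniteKernel_normalizedDensityKernel (μ := μ) hf
  have hdisint : P.map (fun ω => (Z ω, Y ω)) = P.map Z ⊗ₘ normalizedDensityKernel μ f := by
    rw [hZY, hZ_law, withDensity_prod_eq_compProd_normalizedDensityKernel hf hfin]
  filter_upwards [condDistrib_ae_eq_of_measure_eq_compProd Z hY.aemeasurable hdisint] with a ha
  rw [ha, normalizedDensityKernel_apply hf]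

end NormalizedDensityKernel

theorem condDistrib_counterfactual_eq_map_normalized_weighted_prior_general
    {Ω S T : Type*} [MeasurableSpace Ω]
    [MeasurableSpace S] [StandardBorelSpace S] [Nonempty S]
    [MeasurableSpace T] [StandardBorelSpace T] [Nonempty T]
    (P : Measure Ω) [IsProbabilityMeasure P]
    (X : Ω → S) (hX : Measurable X)
    (μ : Measure S) (hμ : μ = P.map X)
    (E : Ω → ℝ) (hE : Measurable E)
    (hindep : IndepFun E X P)
    (p : ℝ → ℝ) (hp_meas : Measurable p)
    (hE_law : P.map E = volume.withDensity (fun u => ENNReal.ofReal (p u)))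
    (g : ℝ × S → ℝ) (g' : ℝ × S → ℝ) (gInv : ℝ × S → ℝ)
    (hg_meas : Measurable g) (hg'_meas : Measurable g') (hgInv_meas : Measurable gInv)
    (hg_deriv : ∀ x u, HasDerivAt (fun u => g (u, x)) (g' (u, x)) u)
    (hg'_pos : ∀ x u, 0 < g' (u, x))
    (hgInv_left : ∀ x u, gInv (g (u, x), x) = u)
    (hgInv_right : ∀ x c, g (gInv (c, x), x) = c)
    (C : Ω → ℝ) (hC : C = fun ω => g (E ω, X ω))
    (h : S → T) (hh : Measurable h) :
    ∀ᵐ c ∂(P.map C),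
      condDistrib (h ∘ X) C P c =
        Measure.map h
          (((μ.withDensity
              (fun x => ENNReal.ofReal (p (gInv (c, x)) / g' (gInv (c, x), x)))) Set.univ)⁻¹ •
            μ.withDensity
              (fun x => ENNReal.ofReal (p (gInv (c, x)) / g' (gInv (c, x), x)))) := by
  subst hμ hC
  have := Measure.isProbabilityMeasure_map (μ := P) hX.aemeasurable
  set W : ℝ × S → ℝ≥0∞ := fun q => ENNReal.ofReal (p (gInv q) / g' (gInv q, q.2))
  have hW : Measurable W := by fun_prop
  have hEX : P.map (fun ω => (E ω, X ω)) = (P.map E).prod (P.map X) :=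
    (indepFun_iff_map_prod_eq_prod_map_map hE.aemeasurable hX.aemeasurable).1 hindep
  have hsection :
      ∀ x, (P.map E).map (fun u => g (u, x)) = volume.withDensity fun c => W (c, x) := by
    intro x
    rw [hE_law, map_withDensity_ofReal_eq_of_hasDerivAt_s5 p (hg_deriv x)
      (fun u => (hg'_pos x u).ne') (hgInv_left x) (hgInv_right x)]
    simp_rw [abs_of_pos (hg'_pos x _)]
    rfl
  have hCX : P.map (fun ω => (g (E ω, X ω), X ω)) = (volume.prod (P.map X)).withDensity W := by
    rw [← map_prodMk_eq_withDensity_prod hg_meas hW hsection, ← hEX,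
      Measure.map_map (hg_meas.prodMk measurable_snd) (hE.prodMk hX)]
    rfl
  filter_upwards [condDistrib_comp _ hX.aemeasurable hh,
    condDistrib_ae_eq_of_map_prodMk_eq_withDensity_prod hX hW hCX] with c hcomp hbayes
  rw [hcomp, Kernel.map_apply _ hh, hbayes]

/-- **Correctness of the three-step counterfactual evaluation (single condition).**
With `C = g (E, X)` as in the u-monotonic model and `h : S → T` the intervened structural
functions, for `(law of C)`-almost every `c` the regular conditional distribution of
`h ∘ X` given `C = c` is the pushforward under `h` of the normalized reweighted prior
`μ.withDensity (x ↦ ω (x, c))` with `ω (x, c) = p (gInv (c, x)) / g' (gInv (c, x), x)`. -/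
theorem condDistrib_counterfactual_eq_map_normalized_weighted_prior
    {Ω S T : Type*} [MeasurableSpace Ω]
    [MeasurableSpace S] [StandardBorelSpace S] [Nonempty S]
    [MeasurableSpace T] [StandardBorelSpace T] [Nonempty T]
    (P : Measure Ω) [IsProbabilityMeasure P]
    (X : Ω → S) (hX : Measurable X)
    (μ : Measure S) (hμ : μ = P.map X)
    (E : Ω → ℝ) (hE : Measurable E)
    (hindep : IndepFun E X P)
    (p : ℝ → ℝ) (hp_meas : Measurable p) (hp_nonneg : ∀ x, 0 ≤ p x)
    (hE_law : P.map E = volume.withDensity (fun u => ENNReal.ofReal (p u)))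
    (g : ℝ × S → ℝ) (g' : ℝ × S → ℝ) (gInv : ℝ × S → ℝ)
    (hg_meas : Measurable g) (hg'_meas : Measurable g') (hgInv_meas : Measurable gInv)
    (hg_deriv : ∀ x u, HasDerivAt (fun u => g (u, x)) (g' (u, x)) u)
    (hg'_pos : ∀ x u, 0 < g' (u, x))
    (hg_mono : ∀ x, StrictMono (fun u => g (u, x)))
    (hg_bij : ∀ x, Function.Bijective (fun u => g (u, x)))
    (hgInv_left : ∀ x u, gInv (g (u, x), x) = u)
    (hgInv_right : ∀ x c, g (gInv (c, x), x) = c)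
    (C : Ω → ℝ) (hC : C = fun ω => g (E ω, X ω))
    (h : S → T) (hh : Measurable h) :
    ∀ᵐ c ∂(P.map C),
      condDistrib (h ∘ X) C P c =
        Measure.map h
          (((μ.withDensity
              (fun x => ENNReal.ofReal (p (gInv (c, x)) / g' (gInv (c, x), x)))) Set.univ)⁻¹ •
            μ.withDensity
              (fun x => ENNReal.ofReal (p (gInv (c, x)) / g' (gInv (c, x), x)))) :=
  condDistrib_counterfactual_eq_map_normalized_weighted_prior_general P X hX μ hμ E hE hindep p
    hp_meas hE_law g g' gInv hg_meas hg'_meas hgInv_meas hg_deriv hg'_pos hgInv_left hgInv_right C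
    hC h hh
end

section
/- Let U_Z, U_X, U_Y be independent real random variables on a probability space (Ω, ℙ), each with distribution gaussianReal 0 1, and set Y = 2·U_Z + U_X + U_Y (corresponding to the SCM Z = U_Z, X = Z + U_X, Y = X + Z + U_Y). Define the counterfactual outcome W = −1 + U_Z + U_Y (the value of Y in the submodel obtained by the intervention do(X = −1)). Then for (law of Y)-almost every y ∈ ℝ, the regular conditional distribution of W given Y = y is condDistrib W Y ℙ (y) = gaussianReal (−1 + y/2) (1/2). In particular, the counterfactual distribution of Y_{do(X = −1)} given the evidence Y = 1 is the normal distribution N(−1/2, 1/2). -/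
/-!
Put `V = (U_Y - U_X) / 2`, so that `W = -1 + Y / 2 + V`. The coefficient vectors `(2, 1, 1)` of
`Y` and `(0, -1/2, 1/2)` of `V` are orthogonal, so `Y` and `V` are uncorrelated jointly Gaussian
variables, hence independent, and `V ∼ N(0, 1/2)`. Conditioning on `Y = y` therefore fixes the
term `-1 + y / 2` and leaves the law of `V` untouched.
-/

open MeasureTheory ProbabilityTheory

section IndepNoise

variable {Ω β γ δ : Type*} [MeasurableSpace Ω] [MeasurableSpace β] [MeasurableSpace γ]
  [MeasurableSpace δ] {P : Measure Ω}

lemma ProbabilityTheory.Kernel.map_id_prod_const_apply (ν : Measure γ) [SFinite ν]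
    {g : β × γ → δ} (hg : Measurable g) (y : β) :
    (Kernel.id ×ₖ Kernel.const β ν).map g y = ν.map (fun v => g (y, v)) := by
  rw [Kernel.map_apply _ hg, Kernel.prod_apply, Kernel.id_apply, Kernel.const_apply,
    Measure.dirac_prod, Measure.map_map hg measurable_prodMk_left]
  rfl

lemma condDistrib_ae_eq_map_of_indepFun [IsFiniteMeasure P] [StandardBorelSpace δ] [Nonempty δ]
    {Y : Ω → β} {V : Ω → γ} (hY : AEMeasurable Y P) (hV : AEMeasurable V P)
    (hYV : IndepFun Y V P) {g : β × γ → δ} (hg : Measurable g) :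
    ∀ᵐ y ∂P.map Y,
      condDistrib (fun ω => g (Y ω, V ω)) Y P y = (P.map V).map (fun v => g (y, v)) := by
  have hjoint : P.map (fun ω => (Y ω, g (Y ω, V ω)))
      = P.map Y ⊗ₘ (Kernel.id ×ₖ Kernel.const β (P.map V)).map g := by
    have hF : Measurable fun p : β × γ => (p.1, g p) := by fun_prop
    rw [show (fun ω => (Y ω, g (Y ω, V ω))) = (fun p : β × γ => (p.1, g p)) ∘ fun ω => (Y ω, V ω)
      from rfl, ← AEMeasurable.map_map_of_aemeasurable hF.aemeasurable (hY.prodMk hV),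
      (indepFun_iff_map_prod_eq_prod_map_map hY hV).1 hYV]
    ext s hs
    rw [Measure.map_apply hF hs, Measure.prod_apply (hF hs), Measure.compProd_apply hs]
    refine lintegral_congr fun y => ?_
    rw [Kernel.map_id_prod_const_apply _ hg,
      Measure.map_apply (by fun_prop) (measurable_prodMk_left hs)]
    rfl
  filter_upwards [condDistrib_ae_eq_of_measure_eq_compProd Y (by fun_prop) hjoint] with y hy
  rw [hy, Kernel.map_id_prod_const_apply _ hg]

end IndepNoise

section StandardGaussianFamily

variable {Ω ι : Type*} [MeasurableSpace Ω] {P : Measure Ω} [Fintype ι] {U : ι → Ω → ℝ}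

lemma covariance_sum_mul_sum_mul_of_iIndepFun [IsProbabilityMeasure P]
    (hU : ∀ i, HasLaw (U i) (gaussianReal 0 1) P) (hind : iIndepFun U P) (a b : ι → ℝ) :
    cov[fun ω => ∑ i, a i * U i ω, fun ω => ∑ i, b i * U i ω; P] = ∑ i, a i * b i := by
  classical
  have hL2 : ∀ (c : ι → ℝ) i, MemLp (fun ω => c i * U i ω) 2 P := fun c i =>
    (hU i).hasGaussianLaw.memLp_two.const_mul (c i)
  have hcov : ∀ i j, cov[U i, U j; P] = if i = j then 1 else 0 := by
    intro i j
    split_ifs with hij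
    · subst hij
      rw [covariance_self (hU i).aemeasurable, (hU i).variance_eq, variance_id_gaussianReal]
      rfl
    · exact (hind.indepFun hij).covariance_eq_zero (hU i).hasGaussianLaw.memLp_two
        (hU j).hasGaussianLaw.memLp_two
  rw [covariance_fun_sum_fun_sum (hL2 a) (hL2 b)]
  simp only [covariance_const_mul_left, covariance_const_mul_right, hcov]
  simp [mul_comm]

lemma hasGaussianLaw_prodMk_sum_mul (hU : ∀ i, HasLaw (U i) (gaussianReal 0 1) P)
    (hind : iIndepFun U P) (a b : ι → ℝ) :
    HasGaussianLaw (fun ω => (∑ i, a i * U i ω, ∑ i, b i * U i ω)) P := by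
  have hvec := hind.hasGaussianLaw fun i => (hU i).hasGaussianLaw
  let L : (ι → ℝ) → (ι → ℝ) →L[ℝ] ℝ := fun c => ∑ i, c i • ContinuousLinearMap.proj i
  exact (hvec.map_fun ((L a).prod (L b))).congr (ae_of_all _ fun ω => by simp [L])

lemma hasLaw_sum_mul [IsProbabilityMeasure P] (hU : ∀ i, HasLaw (U i) (gaussianReal 0 1) P)
    (hind : iIndepFun U P) (a : ι → ℝ) :
    HasLaw (fun ω => ∑ i, a i * U i ω) (gaussianReal 0 (∑ i, a i ^ 2).toNNReal) P := by
  have hX := (hasGaussianLaw_prodMk_sum_mul hU hind a a).fst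
  refine ⟨hX.aemeasurable, ?_⟩
  rw [hX.map_eq_gaussianReal, ← covariance_self hX.aemeasurable,
    covariance_sum_mul_sum_mul_of_iIndepFun hU hind,
    integral_finsetSum _ fun i _ => (hU i).hasGaussianLaw.integrable.const_mul (a i)]
  simp [integral_const_mul, (hU _).integral_eq, sq]

lemma indepFun_sum_mul_of_sum_mul_eq_zero [IsProbabilityMeasure P]
    (hU : ∀ i, HasLaw (U i) (gaussianReal 0 1) P) (hind : iIndepFun U P) {a b : ι → ℝ}
    (hab : ∑ i, a i * b i = 0) :
    IndepFun (fun ω => ∑ i, a i * U i ω) (fun ω => ∑ i, b i * U i ω) P :=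
  (hasGaussianLaw_prodMk_sum_mul hU hind a b).indepFun_of_covariance_eq_zero
    (by rw [covariance_sum_mul_sum_mul_of_iIndepFun hU hind, hab])

end StandardGaussianFamily

/-- **Conclusion of the worked counterfactual computation (Online Appendix 1).**
In the linear Gaussian SCM `Z = U_Z`, `X = Z + U_X`, `Y = X + Z + U_Y` with
`U_Z, U_X, U_Y` i.i.d. `N(0,1)` (so `Y = 2·U_Z + U_X + U_Y`), the counterfactual outcome
`W = −1 + U_Z + U_Y` (the value of `Y` under the intervention `do(X = −1)`) satisfies,
for `(law of Y)`-almost every `y`,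
`condDistrib W Y P y = gaussianReal (−1 + y/2) (1/2)`;
in particular `Y_{do(X=−1)} | (Y = 1) ∼ N(−1/2, 1/2)`. -/
theorem condDistrib_counterfactual_outcome_gaussian
    {Ω : Type*} [MeasurableSpace Ω] (P : Measure Ω) [IsProbabilityMeasure P]
    (UZ UX UY : Ω → ℝ)
    (hUZ : Measurable UZ) (hUX : Measurable UX) (hUY : Measurable UY)
    (hindep : iIndepFun ![UZ, UX, UY] P)
    (hUZ_law : P.map UZ = gaussianReal 0 1)
    (hUX_law : P.map UX = gaussianReal 0 1)
    (hUY_law : P.map UY = gaussianReal 0 1)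
    (Y : Ω → ℝ) (hY : Y = fun ω => 2 * UZ ω + UX ω + UY ω)
    (W : Ω → ℝ) (hW : W = fun ω => -1 + UZ ω + UY ω) :
    ∀ᵐ y ∂(P.map Y),
      condDistrib W Y P y = gaussianReal (-1 + y / 2) (1 / 2) := by
  have hU : ∀ i, HasLaw (![UZ, UX, UY] i) (gaussianReal 0 1) P := by
    intro i
    fin_cases i
    exacts [⟨hUZ.aemeasurable, hUZ_law⟩, ⟨hUX.aemeasurable, hUX_law⟩, ⟨hUY.aemeasurable, hUY_law⟩]
  set V : Ω → ℝ := fun ω => ∑ i, ![0, -1 / 2, 1 / 2] i * ![UZ, UX, UY] i ω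
  have hY_sum : Y = fun ω => ∑ i, ![2, 1, 1] i * ![UZ, UX, UY] i ω := by
    simp [hY, Fin.sum_univ_three]
  have hV : HasLaw V (gaussianReal 0 (1 / 2)) P := by
    convert hasLaw_sum_mul hU hindep ![0, -1 / 2, 1 / 2]
    ext
    norm_num [Fin.sum_univ_three, Matrix.cons_val_two]
  have hYV : IndepFun Y V P := by
    rw [hY_sum]
    exact indepFun_sum_mul_of_sum_mul_eq_zero hU hindep
      (by norm_num [Fin.sum_univ_three, Matrix.cons_val_two])
  have hW_YV : W = fun ω => -1 + Y ω / 2 + V ω := by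
    ext ω
    simp only [hW, hY, V, Fin.sum_univ_three, Matrix.cons_val]
    ring
  filter_upwards [condDistrib_ae_eq_map_of_indepFun (by rw [hY]; fun_prop) hV.aemeasurable hYV
    (g := fun p : ℝ × ℝ => -1 + p.1 / 2 + p.2) (by fun_prop)] with y hy
  rw [hW_YV, hy, hV.map_eq]
  simpa using gaussianReal_map_const_add (μ := 0) (v := 1 / 2) (-1 + y / 2)
end

section
/- Let U₁, …, U_H be independent real random variables on a probability space (Ω, ℙ), each with distribution gaussianReal 0 1, let b₀ ∈ ℝ^J, let B₂ be a J × H real matrix, and let B₁ be a J × J real matrix with (B₁)ᵢⱼ = 0 whenever j ≥ i (so that 1 − B₁ is invertible). Define V = (1 − B₁)⁻¹ *ᵥ (b₀ + B₂ *ᵥ U). Then the cross-covariance between the observed and background variables satisfies E[(Vᵢ − E[Vᵢ]) · U_h] = ((1 − B₁)⁻¹ · B₂)ᵢ_h for every i ∈ Fin J and h ∈ Fin H. -/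
/-!
Since `U h` is centred, the left-hand side is `cov[V i, U h]`. Writing
`V i = ((1 - B₁)⁻¹ *ᵥ b₀) i + ∑ k, ((1 - B₁)⁻¹ * B₂) i k * U k` and using bilinearity of the
covariance reduces it to `∑ k, ((1 - B₁)⁻¹ * B₂) i k * cov[U k, U h]`, and independence together
with unit variances makes `cov[U k, U h]` the identity matrix.
-/

open MeasureTheory ProbabilityTheory Matrix

lemma Matrix.mulVec_add_mulVec_apply {m n p R : Type*} [Fintype n] [Fintype p] [CommSemiring R]
    (A : Matrix m n R) (B : Matrix n p R) (b : n → R) (u : p → R) (i : m) :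
    (A *ᵥ (b + B *ᵥ u)) i = (A *ᵥ b) i + ∑ k, (A * B) i k * u k := by
  rw [mulVec_add, mulVec_mulVec]
  rfl

namespace ProbabilityTheory

variable {Ω ι : Type*} [MeasurableSpace Ω] {P : Measure Ω}

lemma HasLaw.of_map_eq {𝓧 : Type*} [MeasurableSpace 𝓧] {X : Ω → 𝓧} {μ : Measure 𝓧} [NeZero μ]
    (h : P.map X = μ) : HasLaw X μ P :=
  ⟨.of_map_ne_zero (h ▸ NeZero.ne μ), h⟩

lemma integral_sub_integral_mul_eq_covariance {X Y : Ω → ℝ} (hY : P[Y] = 0) :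
    ∫ ω, (X ω - P[X]) * Y ω ∂P = cov[X, Y; P] := by
  simp [covariance, hY]

lemma covariance_const_add_sum_mul_left [IsProbabilityMeasure P] [Fintype ι] {U : ι → Ω → ℝ}
    {Y : Ω → ℝ} (hU : ∀ k, MemLp (U k) 2 P) (hY : MemLp Y 2 P) (c : ℝ) (a : ι → ℝ) :
    cov[fun ω ↦ c + ∑ k, a k * U k ω, Y; P] = ∑ k, a k * cov[U k, Y; P] := by
  have hsum : Integrable (fun ω ↦ ∑ k, a k * U k ω) P :=
    integrable_finsetSum _ fun k _ ↦ ((hU k).integrable one_le_two).const_mul (a k)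
  rw [covariance_const_add_left hsum,
    covariance_fun_sum_left (X := fun k ω ↦ a k * U k ω) (fun k ↦ (hU k).const_mul (a k)) hY]
  simp only [covariance_const_mul_left]

variable {m : ℝ} {v : NNReal}

lemma HasLaw.memLp_two_of_gaussianReal {X : Ω → ℝ} (hX : HasLaw X (gaussianReal m v) P) :
    MemLp X 2 P :=
  hX.hasGaussianLaw.memLp_two

lemma covariance_eq_ite_of_iIndepFun_gaussianReal [IsProbabilityMeasure P] [DecidableEq ι]
    {U : ι → Ω → ℝ} (hU : iIndepFun U P) (hlaw : ∀ k, HasLaw (U k) (gaussianReal m v) P)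
    (k l : ι) :
    cov[U k, U l; P] = if k = l then (v : ℝ) else 0 := by
  split_ifs with hkl
  · rw [hkl, covariance_self (hlaw l).aemeasurable, (hlaw l).variance_eq, variance_id_gaussianReal]
  · exact (hU.indepFun hkl).covariance_eq_zero (hlaw k).memLp_two_of_gaussianReal
      (hlaw l).memLp_two_of_gaussianReal

end ProbabilityTheory

theorem cross_covariance_linear_gaussian_scm_general
    {Ω : Type*} [MeasurableSpace Ω] (P : Measure Ω) [IsProbabilityMeasure P]
    {J H : ℕ} (U : Fin H → Ω → ℝ)
    (hU_indep : iIndepFun U P)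
    (hU_law : ∀ h, P.map (U h) = gaussianReal 0 1)
    (b₀ : Fin J → ℝ) (B₂ : Matrix (Fin J) (Fin H) ℝ)
    (B₁ : Matrix (Fin J) (Fin J) ℝ)
    (V : Ω → Fin J → ℝ)
    (hV : ∀ ω, V ω = (1 - B₁)⁻¹ *ᵥ (b₀ + B₂ *ᵥ fun h => U h ω)) :
    ∀ (i : Fin J) (h : Fin H),
      (∫ ω, (V ω i - ∫ ω', V ω' i ∂P) * U h ω ∂P) = ((1 - B₁)⁻¹ * B₂) i h := by
  intro i h
  have hlaw k : HasLaw (U k) (gaussianReal 0 1) P := .of_map_eq (hU_law k)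
  have hVi : (fun ω ↦ V ω i) =
      fun ω ↦ ((1 - B₁)⁻¹ *ᵥ b₀) i + ∑ k, ((1 - B₁)⁻¹ * B₂) i k * U k ω := by
    ext ω
    rw [hV, mulVec_add_mulVec_apply]
  rw [integral_sub_integral_mul_eq_covariance ((hlaw h).integral_eq.trans integral_id_gaussianReal),
    hVi, covariance_const_add_sum_mul_left (fun k ↦ (hlaw k).memLp_two_of_gaussianReal)
      (hlaw h).memLp_two_of_gaussianReal]
  simp [covariance_eq_ite_of_iIndepFun_gaussianReal hU_indep hlaw]

/-- **Cross-covariance block `Σ_VU = (I − B₁)⁻¹ B₂` (Online Appendix 2).**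
For the linear Gaussian SCM `V = (1 − B₁)⁻¹ *ᵥ (b₀ + B₂ *ᵥ U)` with mutually
independent standard normal background variables `U` and strictly triangular `B₁`,
the cross-covariance between observed and background variables satisfies
`E[(Vᵢ − E[Vᵢ]) · U_h] = ((1 − B₁)⁻¹ · B₂)ᵢₕ`. -/
theorem cross_covariance_linear_gaussian_scm
    {Ω : Type*} [MeasurableSpace Ω] (P : Measure Ω) [IsProbabilityMeasure P]
    {J H : ℕ} (U : Fin H → Ω → ℝ) (hU_meas : ∀ h, Measurable (U h))
    (hU_indep : iIndepFun U P)
    (hU_law : ∀ h, P.map (U h) = gaussianReal 0 1)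
    (b₀ : Fin J → ℝ) (B₂ : Matrix (Fin J) (Fin H) ℝ)
    (B₁ : Matrix (Fin J) (Fin J) ℝ)
    (htri : ∀ i j : Fin J, i ≤ j → B₁ i j = 0)
    (V : Ω → Fin J → ℝ)
    (hV : ∀ ω, V ω = (1 - B₁)⁻¹ *ᵥ (b₀ + B₂ *ᵥ fun h => U h ω)) :
    ∀ (i : Fin J) (h : Fin H),
      (∫ ω, (V ω i - ∫ ω', V ω' i ∂P) * U h ω ∂P) = ((1 - B₁)⁻¹ * B₂) i h :=
  cross_covariance_linear_gaussian_scm_general P U hU_indep hU_law b₀ B₂ B₁ V hV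
end
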